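/- arXiv:1609.09034 — 13 statements merged into one kernel-verified Lean document; each statement's English description precedes it below -/
import Mathlib

section
/- Let R be a commutative ring with identity, I a proper ideal of R, and p a prime ideal of R that is minimal over I. If the ideal p/I of the quotient ring R/I is finitely generated, then p is an associated prime of the R-module R/I. -/
/-!
Pass to `A = R ⧸ I`, where `q = p/I` is a minimal prime of `A`. In the localization `A_q` the
maximal ideal is the only prime, so it is the radical of `0`, the annihilator of `1`: it is an
associated prime of `A_q`. Because `q` is finitely generated, associated primes of `A_q` descend to
associated primes of `A` (Stacks 0310), and associated primes over `A` pull back to `R`.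
-/

open IsLocalRing Submodule Module.associatedPrimes

theorem Ideal.comap_mem_associatedPrimes {R A M : Type*} [CommSemiring R] [CommSemiring A]
    [Algebra R A] [AddCommMonoid M] [Module A M] [Module R M] [IsScalarTower R A M]
    {q : Ideal A} (hq : q ∈ associatedPrimes A M) :
    q.comap (algebraMap R A) ∈ associatedPrimes R M := by
  obtain ⟨_, x, rfl⟩ := hq
  refine ⟨Ideal.comap_isPrime _ _, x, ?_⟩
  rw [Ideal.comap_radical]
  congr 1
  ext r
  simp only [Ideal.mem_comap, mem_colon_singleton, algebraMap_smul, Submodule.mem_bot]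

theorem Localization.AtPrime.maximalIdeal_mem_associatedPrimes_of_mem_minimalPrimes
    {A : Type*} [CommRing A] {q : Ideal A} [q.IsPrime] (hq : q ∈ minimalPrimes A) :
    maximalIdeal (Localization.AtPrime q) ∈
      associatedPrimes (Localization.AtPrime q) (Localization.AtPrime q) := by
  refine ⟨inferInstance, 1, ?_⟩
  rw [← IsLocalization.AtPrime.map_eq_maximalIdeal q,
    ← IsLocalization.AtPrime.radical_map_of_mem_minimalPrimes _ q ⊥ hq]
  congr 1
  ext r
  simp only [Ideal.map_bot, mem_bot, mem_colon_singleton, smul_eq_mul, mul_one]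

theorem Ideal.mem_associatedPrimes_of_mem_minimalPrimes_of_fg {A : Type*} [CommRing A]
    {q : Ideal A} (hq : q ∈ minimalPrimes A) (hfg : q.FG) : q ∈ associatedPrimes A A := by
  have := hq.isPrime
  rw [← Localization.AtPrime.under_maximalIdeal (I := q)] at hfg ⊢
  exact comap_mem_associatedPrimes_of_mem_associatedPrimes_of_isLocalizedModule_of_fg q.primeCompl
    (Algebra.linearMap A _) _
    (Localization.AtPrime.maximalIdeal_mem_associatedPrimes_of_mem_minimalPrimes hq) hfg

theorem minimalPrime_mem_associatedPrimes_of_fg_general {R : Type*} [CommRing R]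
    (I : Ideal R) (p : Ideal R) (hp : p ∈ I.minimalPrimes)
    (hfg : (p.map (Ideal.Quotient.mk I)).FG) :
    p ∈ associatedPrimes R (R ⧸ I) := by
  obtain ⟨q, hq, rfl⟩ := Ideal.minimalPrimes_eq_comap.subset hp
  rw [Ideal.map_comap_of_surjective _ Ideal.Quotient.mk_surjective] at hfg
  exact Ideal.comap_mem_associatedPrimes (R := R)
    (Ideal.mem_associatedPrimes_of_mem_minimalPrimes_of_fg hq hfg)

/-- Let `R` be a commutative ring, `I` a proper ideal of `R`, and `p` a prime ideal minimal
over `I`. If the ideal `p/I` of `R ⧸ I` is finitely generated, then `p` is an associated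
prime of the `R`-module `R ⧸ I`. -/
theorem minimalPrime_mem_associatedPrimes_of_fg {R : Type*} [CommRing R]
    (I : Ideal R) (hI : I ≠ ⊤) (p : Ideal R) (hp : p ∈ I.minimalPrimes)
    (hfg : (p.map (Ideal.Quotient.mk I)).FG) :
    p ∈ associatedPrimes R (R ⧸ I) :=
  minimalPrime_mem_associatedPrimes_of_fg_general I p hp hfg
end

section
/- Let R be a commutative ring with identity. The prime spectrum Spec R (with the Zariski topology) is a Noetherian topological space if and only if each prime ideal of R is equal to the radical of a finitely generated ideal of R. -/
/-- If the radical of `I` is the radical of a f.g. ideal, then it is the radical of a f.g.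
ideal contained in `I`. -/
lemma exists_fg_le_radical_eq_radical {R : Type*} [CommRing R] {I J : Ideal R}
    (hJ : J.FG) (h : I.radical = J.radical) :
    ∃ J' : Ideal R, J'.FG ∧ J' ≤ I ∧ I.radical = J'.radical := by
  obtain ⟨s, rfl⟩ := hJ
  have hx : ∀ x ∈ (s : Set R), ∃ n : ℕ, x ^ n ∈ I := by
    intro x hxs
    have : x ∈ I.radical := by
      rw [h]
      exact Ideal.le_radical (Ideal.subset_span hxs)
    exact this
  choose! n hn using hx
  refine ⟨Ideal.span ((fun x => x ^ n x) '' s), Submodule.fg_span (s.finite_toSet.image _),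
    ?_, ?_⟩
  · rw [Ideal.span_le]
    rintro _ ⟨x, hxs, rfl⟩
    exact hn x hxs
  · apply le_antisymm
    · rw [h]
      have : Ideal.span (s : Set R) ≤ (Ideal.span ((fun x => x ^ n x) '' s)).radical := by
        rw [Ideal.span_le]
        intro x hxs
        exact ⟨n x, Ideal.subset_span ⟨x, hxs, rfl⟩⟩
      calc (Ideal.span (s : Set R)).radical
          ≤ ((Ideal.span ((fun x => x ^ n x) '' s)).radical).radical :=
            Ideal.radical_mono this
        _ = _ := Ideal.radical_idem _
    · apply Ideal.radical_mono
      rw [Ideal.span_le]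
      rintro _ ⟨x, hxs, rfl⟩
      exact hn x hxs

/-- If every prime is the radical of a f.g. ideal, then the radical of every ideal is the
radical of a f.g. ideal. -/
lemma forall_radical_eq_radical_fg {R : Type*} [CommRing R]
    (h : ∀ p : Ideal R, p.IsPrime → ∃ J : Ideal R, J.FG ∧ p = J.radical) :
    ∀ I : Ideal R, ∃ J : Ideal R, J.FG ∧ I.radical = J.radical := by
  by_contra hc
  push_neg at hc
  obtain ⟨I₀, hI₀⟩ := hc
  set T : Set (Ideal R) := {I | ∀ J : Ideal R, J.FG → I.radical ≠ J.radical} with hT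
  have hub : ∀ c ⊆ T, IsChain (· ≤ ·) c → ∀ y ∈ c, ∃ ub ∈ T, ∀ z ∈ c, z ≤ ub := by
    intro c hcT hchain y hy
    refine ⟨sSup c, ?_, fun z hz => le_sSup hz⟩
    intro J hJfg heq
    obtain ⟨J', hJ'fg, hJ'le, hJ'⟩ := exists_fg_le_radical_eq_radical hJfg heq
    have hcompact := (Submodule.fg_iff_compact J').mp hJ'fg
    obtain ⟨K, hKc, hJ'K⟩ :=
      ((CompleteLattice.isCompactElement_iff_le_of_directed_sSup_le (Ideal R) J').mp hcompact) c
        ⟨y, hy⟩ hchain.directedOn hJ'le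
    refine hcT hKc J' hJ'fg (le_antisymm ?_ (Ideal.radical_mono hJ'K))
    calc K.radical ≤ (sSup c).radical := Ideal.radical_mono (le_sSup hKc)
      _ = J'.radical := hJ'
  obtain ⟨M, -, hM⟩ := zorn_le_nonempty₀ T hub I₀ hI₀
  -- M is maximal in T
  have hMT : M ∈ T := hM.1
  -- M is radical
  have hMrad : M.radical = M := by
    have hMrT : M.radical ∈ T := by
      intro J hJfg heq
      exact hMT J hJfg (by rwa [Ideal.radical_idem] at heq)
    exact le_antisymm (hM.2 hMrT Ideal.le_radical) Ideal.le_radical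
  -- M is prime
  have hprime : M.IsPrime := by
    constructor
    · rintro rfl
      exact hMT ⊤ ⟨{1}, by simp⟩ (by simp [Ideal.radical_top])
    · intro a b hab
      by_contra hnab
      push_neg at hnab
      obtain ⟨ha, hb⟩ := hnab
      -- A₀ = M + (a)
      set A₀ : Ideal R := M ⊔ Ideal.span {a} with hA₀
      have hA₀T : A₀ ∉ T := by
        intro hA₀T
        exact ha (hM.2 hA₀T le_sup_left (Ideal.mem_sup_right
          (Ideal.mem_span_singleton_self a)))
      rw [hT, Set.mem_setOf_eq] at hA₀T
      push_neg at hA₀T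
      obtain ⟨J₁, hJ₁fg, hJ₁⟩ := hA₀T
      obtain ⟨A, hAfg, hAle, hArad⟩ := exists_fg_le_radical_eq_radical hJ₁fg hJ₁
      -- C = (M : a)
      set C : Ideal R := M.colon (Ideal.span {a}) with hC
      have hMC : M ≤ C := fun x hx => Ideal.mem_colon_span_singleton.mpr (Ideal.mul_mem_right a M hx)
      have hbC : b ∈ C := Ideal.mem_colon_span_singleton.mpr (by rwa [mul_comm])
      have hCT : C ∉ T := fun hCT => hb (hM.2 hCT hMC hbC)
      rw [hT, Set.mem_setOf_eq] at hCT
      push_neg at hCT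
      obtain ⟨J₂, hJ₂fg, hJ₂⟩ := hCT
      obtain ⟨B, hBfg, hBle, hBrad⟩ := exists_fg_le_radical_eq_radical hJ₂fg hJ₂
      -- M.radical = (A * B).radical, contradiction
      refine hMT (A * B) (Submodule.FG.mul hAfg hBfg) (le_antisymm ?_ ?_)
      · rw [Ideal.radical_mul]
        refine le_inf ?_ ?_
        · calc M.radical ≤ A₀.radical := Ideal.radical_mono le_sup_left
            _ = A.radical := hArad
        · calc M.radical ≤ C.radical := Ideal.radical_mono hMC
            _ = B.radical := hBrad
      · apply Ideal.radical_mono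
        rw [Ideal.mul_le]
        intro x hxA y hyB
        have hx : x ∈ M ⊔ Ideal.span {a} := hAle hxA
        rw [Submodule.mem_sup] at hx
        obtain ⟨m, hm, z, hz, rfl⟩ := hx
        rw [Ideal.mem_span_singleton'] at hz
        obtain ⟨r, rfl⟩ := hz
        have hy : y * a ∈ M := Ideal.mem_colon_span_singleton.mp (hBle hyB)
        have : (m + r * a) * y = m * y + r * (y * a) := by ring
        rw [this]
        exact Ideal.add_mem M (Ideal.mul_mem_right y M hm) (Ideal.mul_mem_left M r hy)
  obtain ⟨J, hJfg, hJ⟩ := h M hprime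
  exact hMT J hJfg (by rw [hMrad, ← hJ])

/-- `Spec R` is a Noetherian topological space if and only if every prime ideal of `R`
is the radical of a finitely generated ideal. -/
theorem noetherianSpace_iff_primes_radical_of_fg {R : Type*} [CommRing R] :
    TopologicalSpace.NoetherianSpace (PrimeSpectrum R) ↔
      ∀ p : Ideal R, p.IsPrime → ∃ J : Ideal R, J.FG ∧ p = J.radical := by
  constructor
  · intro H p hp
    obtain ⟨I, hIfg, hI⟩ := PrimeSpectrum.isCompact_isOpen_iff_ideal.mp
      ⟨TopologicalSpace.NoetherianSpace.isCompact ((PrimeSpectrum.zeroLocus (p : Set R))ᶜ),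
        (PrimeSpectrum.isClosed_zeroLocus (p : Set R)).isOpen_compl⟩
    have hzl : PrimeSpectrum.zeroLocus (I : Set R) = PrimeSpectrum.zeroLocus (p : Set R) :=
      compl_injective hI
    rw [PrimeSpectrum.zeroLocus_eq_iff] at hzl
    exact ⟨I, hIfg, by rw [hzl, hp.radical]⟩
  · intro h
    rw [TopologicalSpace.noetherianSpace_iff_opens]
    intro U
    obtain ⟨s, hs⟩ := (PrimeSpectrum.isOpen_iff (U : Set (PrimeSpectrum R))).mp U.2
    have hU : (U : Set (PrimeSpectrum R)) = (PrimeSpectrum.zeroLocus s)ᶜ := by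
      rw [← hs, compl_compl]
    obtain ⟨J, hJfg, hJ⟩ := forall_radical_eq_radical_fg h (Ideal.span s)
    have hzl : (PrimeSpectrum.zeroLocus (J : Set R))ᶜ = (U : Set (PrimeSpectrum R)) := by
      rw [hU]
      congr 1
      rw [← PrimeSpectrum.zeroLocus_span s]
      exact PrimeSpectrum.zeroLocus_eq_iff.mpr hJ.symm
    exact (PrimeSpectrum.isCompact_isOpen_iff_ideal.mpr ⟨J, hJfg, hzl⟩).1
end

section
/- Let R be a weakly Laskerian commutative ring whose Krull dimension is finite. Then the prime spectrum Spec R (with the Zariski topology) is a Noetherian topological space. -/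
/-!
If an ideal `I` had infinitely many minimal primes, one could choose distinct minimal primes
`pₙ` and elements `aₙ` with `aₙ ∉ pₙ` but `aₙ ∈ pₘ` for `m ≠ n`; then every `pₙ` is the
annihilator of `aₙ` in `R ⧸ ⋂ pₘ`, so a weakly Laskerian ring has finitely many minimal primes
over every ideal.

Finite Krull dimension gives the ascending chain condition on primes. An ascending chain of
radical ideals `Jₙ` is the intersection of the chains `√(Jₙ + p)`, `p` running over the finitely
many minimal primes of `J₀`; each of these either stays equal to `p` or eventually lies strictly
above `p`, so by well-founded induction over the primes, upwards, all of them stabilise, hence so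
does `Jₙ`. This is the ascending chain condition on closed subsets of `Spec R`.
-/

/-- An `R`-module `M` is *weakly Laskerian* if every quotient of `M` has only finitely many
associated prime ideals. -/
def IsWeaklyLaskerian (R : Type*) [CommRing R] (M : Type*) [AddCommGroup M]
    [Module R M] : Prop :=
  ∀ N : Submodule R M, (associatedPrimes R (M ⧸ N)).Finite

open Filter TopologicalSpace

theorem Order.wellFoundedGT_of_krullDim_lt_top {α : Type*} [PartialOrder α]
    (h : Order.krullDim α < ⊤) : WellFoundedGT α :=
  StrictAnti.wellFoundedGT (f := Order.coheight) fun _ b hab => Order.coheight_strictAnti hab <|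
    WithBot.coe_lt_coe.mp ((Order.coheight_le_krullDim b).trans_lt h)

theorem Filter.EventuallyConst.biInf {α ι β : Type*} [CompleteLattice β] {l : Filter α}
    {s : Set ι} (hs : s.Finite) {g : ι → α → β} (hg : ∀ i ∈ s, EventuallyConst (g i) l) :
    EventuallyConst (fun x => ⨅ i ∈ s, g i x) l := by
  classical
  have hc : ∀ i, ∃ c : β, i ∈ s → g i =ᶠ[l] fun _ => c := fun i =>
    if hi : i ∈ s then (eventuallyConst_iff_exists_eventuallyEq.mp (hg i hi)).imp fun _ h _ => h
    else ⟨⊤, fun h => absurd h hi⟩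
  choose c hc using hc
  exact eventuallyConst_iff_exists_eventuallyEq.mpr ⟨⨅ i ∈ s, c i,
    (hs.eventually_all.mpr hc).mono fun _ hx => iInf_congr fun i => iInf_congr (hx i)⟩

namespace Ideal

variable {R : Type*} [CommSemiring R] {I p q : Ideal R}

theorem exists_mul_pow_mem_of_mem_minimalPrimes (hp : p ∈ I.minimalPrimes) {x : R}
    (hx : x ∈ p) : ∃ y ∉ p, ∃ n : ℕ, y * x ^ n ∈ I := by
  have := hp.isPrime
  by_contra! h
  let S := p.primeCompl ⊔ Submonoid.powers x
  have hIS : Disjoint (I : Set R) S := by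
    refine Set.disjoint_right.mpr fun s hs hsI => ?_
    obtain ⟨y, hy, _, ⟨n, rfl⟩, rfl⟩ := Submonoid.mem_sup.mp hs
    exact h y hy n hsI
  obtain ⟨q, hq, hIq, hqS⟩ := exists_le_prime_disjoint I S hIS
  have hqp : q ≤ p := fun z hz =>
    by_contra fun hzp => Set.disjoint_left.mp hqS hz (Submonoid.mem_sup_left hzp)
  exact Set.disjoint_left.mp hqS (hp.2 ⟨hq, hIq⟩ hqp hx)
    (Submonoid.mem_sup_right (Submonoid.mem_powers x))

theorem exists_mul_mem_of_mem_minimalPrimes_of_ne (hp : p ∈ I.minimalPrimes)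
    (hq : q ∈ I.minimalPrimes) (hpq : p ≠ q) : ∃ a ∉ p, ∃ b ∉ q, a * b ∈ I := by
  obtain ⟨x, hxq, hxp⟩ :=
    SetLike.not_le_iff_exists.mp fun hqp => hpq ((hp.2 hq.1 hqp).antisymm hqp)
  obtain ⟨y, hy, n, hyx⟩ := exists_mul_pow_mem_of_mem_minimalPrimes hq hxq
  exact ⟨x ^ n, fun h => hxp (hp.isPrime.mem_of_pow_mem n h), y, hy, mul_comm y _ ▸ hyx⟩

theorem exists_notMem_infinite_of_subset_minimalPrimes {T : Set (Ideal R)}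
    (hT : T ⊆ I.minimalPrimes) (hinf : T.Infinite) :
    ∃ p ∈ T, ∃ a ∉ p, {r ∈ T | a ∈ r}.Infinite := by
  obtain ⟨p, hp, q, hq, hpq⟩ := hinf.nontrivial
  obtain ⟨a, ha, b, hb, hab⟩ := exists_mul_mem_of_mem_minimalPrimes_of_ne (hT hp) (hT hq) hpq
  have hcover : T ⊆ {r ∈ T | a ∈ r} ∪ {r ∈ T | b ∈ r} := fun r hr =>
    ((hT hr).isPrime.mem_or_mem ((hT hr).le hab)).imp (⟨hr, ·⟩) (⟨hr, ·⟩)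
  rcases Set.infinite_union.mp (hinf.mono hcover) with h | h
  exacts [⟨p, hp, a, ha, h⟩, ⟨q, hq, b, hb, h⟩]

theorem exists_triangular_seq_minimalPrimes (hinf : I.minimalPrimes.Infinite) :
    ∃ (p : ℕ → Ideal R) (a : ℕ → R), (∀ n, p n ∈ I.minimalPrimes) ∧ (∀ n, a n ∉ p n) ∧
      ∀ m n, m < n → a m ∈ p n := by
  let 𝒯 := {T : Set (Ideal R) // T ⊆ I.minimalPrimes ∧ T.Infinite}
  choose p hpT a hap hinf' using fun T : 𝒯 =>
    exists_notMem_infinite_of_subset_minimalPrimes T.2.1 T.2.2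
  let next : 𝒯 → 𝒯 := fun T => ⟨{r ∈ T.1 | a T ∈ r}, fun _ hr => T.2.1 hr.1, hinf' T⟩
  let T : ℕ → 𝒯 := fun n => next^[n] ⟨_, subset_rfl, hinf⟩
  have hT_succ : ∀ n, T (n + 1) = next (T n) := fun n => Function.iterate_succ_apply' ..
  have hT : Antitone fun n => (T n).1 := antitone_nat_of_succ_le fun n => by
    rw [hT_succ]
    exact fun _ hr => hr.1
  refine ⟨fun n => p (T n), fun n => a (T n), fun n => (T n).2.1 (hpT _), fun n => hap _,
    fun m n hmn => ?_⟩
  have hmem : p (T n) ∈ (T (m + 1)).1 := hT hmn (hpT _)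
  rw [hT_succ] at hmem
  exact hmem.2

theorem exists_separated_seq_minimalPrimes (hinf : I.minimalPrimes.Infinite) :
    ∃ (p : ℕ → Ideal R) (a : ℕ → R), (∀ n, p n ∈ I.minimalPrimes) ∧ (∀ n, a n ∉ p n) ∧
      ∀ m n, m ≠ n → a n ∈ p m := by
  obtain ⟨p, b, hp, hbp, hb⟩ := exists_triangular_seq_minimalPrimes hinf
  have hle : ∀ m n, m < n → ¬p m ≤ p n := fun m n hmn hmn_le =>
    hbp m ((hp n).2 (hp m).1 hmn_le (hb m n hmn))
  -- `b n` already lies in the later primes; multiplying by `π n` puts it in the earlier ones.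
  have hπ : ∀ n, ∃ π ∈ (Finset.range n).inf p, π ∉ p n := fun n =>
    SetLike.not_le_iff_exists.mp fun hinf_le => by
      obtain ⟨m, hm, hmn⟩ := ((hp n).isPrime.inf_le').mp hinf_le
      exact hle m n (Finset.mem_range.mp hm) hmn
  choose π hπ hπn using hπ
  refine ⟨p, fun n => b n * π n, hp, fun n => (hp n).isPrime.mul_notMem (hbp n) (hπn n),
    fun m n hmn => ?_⟩
  rcases hmn.lt_or_gt with h | h
  · exact mul_mem_left _ _ (Finset.inf_le (f := p) (Finset.mem_range.mpr h) (hπ n))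
  · exact mul_mem_right _ _ (hb n m h)

end Ideal

theorem Ideal.mem_associatedPrimes_quotient_iInf {R ι : Type*} [CommRing R] {p : ι → Ideal R}
    {a : ι → R} {i : ι} (hp : (p i).IsPrime) (hai : a i ∉ p i) (ha : ∀ j, j ≠ i → a i ∈ p j) :
    p i ∈ associatedPrimes R (R ⧸ ⨅ j, p j) := by
  refine ⟨hp, Submodule.Quotient.mk (a i), ?_⟩
  suffices hcolon :
      (⊥ : Submodule R (R ⧸ ⨅ j, p j)).colon {Submodule.Quotient.mk (a i)} = p i by
    rw [hcolon, hp.radical]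
  ext r
  rw [Submodule.mem_colon_singleton, Submodule.mem_bot, ← Submodule.Quotient.mk_smul,
    Submodule.Quotient.mk_eq_zero, smul_eq_mul, Submodule.mem_iInf]
  refine ⟨fun hr => (hp.mem_or_mem (hr i)).resolve_right hai, fun hr j => ?_⟩
  by_cases hj : j = i
  · subst hj
    exact Ideal.mul_mem_right _ _ hr
  · exact Ideal.mul_mem_left _ _ (ha j hj)

theorem IsWeaklyLaskerian.minimalPrimes_finite {R : Type*} [CommRing R]
    (hR : IsWeaklyLaskerian R R) (I : Ideal R) : I.minimalPrimes.Finite := by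
  by_contra hinf
  obtain ⟨p, a, hp, hap, ha⟩ := Ideal.exists_separated_seq_minimalPrimes hinf
  have hinj : Function.Injective p := fun m n hpmn =>
    by_contra fun hmn => hap n (hpmn ▸ ha m n hmn)
  exact Set.infinite_of_injective_forall_mem hinj
    (fun n => Ideal.mem_associatedPrimes_quotient_iInf (hp n).isPrime (hap n) fun m hmn => ha m n hmn)
    (hR _)

namespace Ideal

variable {R : Type*} [CommSemiring R]

def HasRadicalACCAbove (I : Ideal R) : Prop :=
  ∀ f : ℕ → Ideal R, Monotone f → (∀ n, (f n).IsRadical) → I ≤ f 0 → EventuallyConst f atTop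

theorem IsRadical.eq_iInf_radical_sup_minimalPrimes {I J : Ideal R} (hJ : J.IsRadical)
    (hIJ : I ≤ J) : J = ⨅ p ∈ I.minimalPrimes, (J ⊔ p).radical := by
  refine le_antisymm (le_iInf₂ fun p _ => le_sup_left.trans le_radical) ?_
  calc ⨅ p ∈ I.minimalPrimes, (J ⊔ p).radical ≤ sInf {q | J ≤ q ∧ q.IsPrime} :=
        le_sInf fun q ⟨hJq, hq⟩ => by
          obtain ⟨p, hp, hpq⟩ := exists_minimalPrimes_le (hIJ.trans hJq)
          exact (iInf₂_le p hp).trans (hq.radical_le_iff.mpr (sup_le hJq hpq))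
    _ = J := by rw [← radical_eq_sInf, hJ.radical]

theorem hasRadicalACCAbove_of_forall_isPrime {I : Ideal R}
    (hfin : ∀ J : Ideal R, J.minimalPrimes.Finite)
    (h : ∀ q : Ideal R, q.IsPrime → I ≤ q → q.HasRadicalACCAbove) : I.HasRadicalACCAbove := by
  intro f hf hrad hI
  have hg : ∀ q ∈ (f 0).minimalPrimes, EventuallyConst (fun n => (f n ⊔ q).radical) atTop :=
    fun q hq => h q hq.isPrime (hI.trans hq.le) _
      (fun _ _ hmn => radical_mono (sup_le_sup_right (hf hmn) q))
      (fun _ => radical_isRadical _) (le_sup_right.trans le_radical)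
  have hf_eq : f = fun n => ⨅ q ∈ (f 0).minimalPrimes, (f n ⊔ q).radical :=
    funext fun n => (hrad n).eq_iInf_radical_sup_minimalPrimes (hf (Nat.zero_le n))
  rw [hf_eq]
  exact EventuallyConst.biInf (hfin _) hg

theorem hasRadicalACCAbove_of_forall_lt {I : Ideal R}
    (hfin : ∀ J : Ideal R, J.minimalPrimes.Finite)
    (h : ∀ q : Ideal R, q.IsPrime → I < q → q.HasRadicalACCAbove) : I.HasRadicalACCAbove := by
  intro f hf hrad hI
  by_cases hfI : ∀ n, f n ≤ I
  · exact eventuallyConst_atTop.mpr ⟨0, fun n _ => ((hfI n).trans hI).antisymm (hf n.zero_le)⟩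
  obtain ⟨n₀, hn₀⟩ := not_forall.mp hfI
  have hIn₀ : I ≤ f n₀ := hI.trans (hf n₀.zero_le)
  have hshift : EventuallyConst (fun n => f (n₀ + n)) atTop :=
    hasRadicalACCAbove_of_forall_isPrime hfin
      (fun q hq hle => h q hq (lt_of_le_of_ne (hIn₀.trans hle) fun hIq => hn₀ (hIq ▸ hle)))
      _ (fun _ _ hmn => hf (Nat.add_le_add_left hmn n₀)) (fun _ => hrad _) le_rfl
  obtain ⟨i, hi⟩ := eventuallyConst_atTop.mp hshift
  refine eventuallyConst_atTop.mpr ⟨n₀ + i, fun j hj => ?_⟩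
  obtain ⟨k, rfl⟩ := Nat.exists_eq_add_of_le (le_of_add_le_left hj)
  exact hi k (by omega)

theorem hasRadicalACCAbove_of_wellFoundedGT [WellFoundedGT (PrimeSpectrum R)]
    (hfin : ∀ J : Ideal R, J.minimalPrimes.Finite) (I : Ideal R) : I.HasRadicalACCAbove := by
  suffices hprime : ∀ x : PrimeSpectrum R, x.asIdeal.HasRadicalACCAbove from
    hasRadicalACCAbove_of_forall_isPrime hfin fun q hq _ => hprime ⟨q, hq⟩
  intro x
  induction x using WellFoundedGT.induction with
  | _ x ih => exact hasRadicalACCAbove_of_forall_lt hfin fun q hq hlt => ih ⟨q, hq⟩ hlt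

end Ideal

theorem PrimeSpectrum.noetherianSpace_of_wellFoundedGT_of_minimalPrimes_finite {R : Type*}
    [CommSemiring R] [WellFoundedGT (PrimeSpectrum R)]
    (hfin : ∀ I : Ideal R, I.minimalPrimes.Finite) :
    NoetherianSpace (PrimeSpectrum R) := by
  refine ((noetherianSpace_TFAE _).out 0 1).mpr ?_
  rw [← wellFoundedGT_dual_iff, wellFoundedGT_iff_monotone_chain_condition]
  intro a
  obtain ⟨n, hn⟩ := eventuallyConst_atTop.mp <| Ideal.hasRadicalACCAbove_of_wellFoundedGT hfin ⊥
    (closedsEmbedding R ∘ a) ((closedsEmbedding R).monotone.comp a.monotone)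
    (fun _ => isRadical_vanishingIdeal _) bot_le
  exact ⟨n, fun m hm => ((closedsEmbedding R).injective (hn m hm)).symm⟩

/-- If `R` is a weakly Laskerian commutative ring of finite Krull dimension, then
`Spec R` is a Noetherian topological space. -/
theorem noetherianSpace_of_weaklyLaskerian_of_finiteKrullDim {R : Type*} [CommRing R]
    (hR : IsWeaklyLaskerian R R) (hdim : ringKrullDim R < ⊤) :
    TopologicalSpace.NoetherianSpace (PrimeSpectrum R) :=
  have : WellFoundedGT (PrimeSpectrum R) := Order.wellFoundedGT_of_krullDim_lt_top hdim
  PrimeSpectrum.noetherianSpace_of_wellFoundedGT_of_minimalPrimes_finite hR.minimalPrimes_finite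
end

section
/- Let R be a commutative ring and X an indeterminate over R. If the polynomial ring R[X] is a weakly Laskerian ring, then the prime spectrum Spec R (with the Zariski topology) is a Noetherian topological space. -/
open Polynomial TopologicalSpace

theorem PrimeSpectrum.noetherianSpace_of_forall_not_strictMono {R : Type*} [CommSemiring R]
    (h : ∀ I : ℕ → Ideal R, (∀ n, (I n).IsRadical) → ¬ StrictMono I) :
    NoetherianSpace (PrimeSpectrum R) := by
  suffices WellFoundedLT (Closeds (PrimeSpectrum R)) from
    ((noetherianSpace_TFAE (PrimeSpectrum R)).out 0 1).mpr this
  refine ⟨wellFounded_iff_isEmpty_descending_chain.mpr ⟨fun ⟨Z, hZ⟩ => ?_⟩⟩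
  exact h (fun n => closedsEmbedding R (OrderDual.toDual (Z n)))
    (fun n => isRadical_vanishingIdeal _)
    (strictMono_nat_of_lt_succ fun n => (closedsEmbedding R).lt_iff_lt.mpr (hZ n))

theorem Ideal.IsRadical.exists_le_isPrime_notMem {R : Type*} [CommSemiring R] {I : Ideal R}
    (hI : I.IsRadical) {a : R} (ha : a ∉ I) : ∃ p : Ideal R, p.IsPrime ∧ I ≤ p ∧ a ∉ p := by
  rw [← hI.radical, radical_eq_sInf, Submodule.mem_sInf] at ha
  push Not at ha
  obtain ⟨p, ⟨hIp, hp⟩, hap⟩ := ha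
  exact ⟨p, hp, hIp, hap⟩

theorem Ideal.mul_mem_span_singleton_mul_sup_iff {R : Type*} [CommRing R] {p J : Ideal R}
    [p.IsPrime] (hJ : J ≤ p) {a : R} (ha : a ∉ p) (c : R) :
    a * c ∈ span {a} * p ⊔ J ↔ c ∈ p := by
  refine ⟨fun hc => ?_, fun hc => mem_sup_left (mem_span_singleton_mul.mpr ⟨c, hc, rfl⟩)⟩
  obtain ⟨y, hy, j, hj, hyj⟩ := Submodule.mem_sup.mp hc
  obtain ⟨d, hd, rfl⟩ := mem_span_singleton_mul.mp hy
  have hcd : a * (c - d) ∈ p := by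
    rw [mul_sub, ← hyj, add_sub_cancel_left]
    exact hJ hj
  simpa using add_mem ((Ideal.IsPrime.mem_or_mem ‹_› hcd).resolve_left ha) hd

namespace Polynomial

section CommSemiring

variable {R : Type*} [CommSemiring R]

def coeffIdeal (D : ℕ → Ideal R) (hD : Monotone D) : Ideal R[X] where
  carrier := {f | ∀ k, f.coeff k ∈ D k}
  add_mem' hf hg k := by
    rw [coeff_add]
    exact add_mem (hf k) (hg k)
  zero_mem' k := by
    rw [coeff_zero]
    exact zero_mem _
  smul_mem' g f hf k := by
    rw [smul_eq_mul, coeff_mul]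
    refine sum_mem fun ij hij => Ideal.mul_mem_left _ _ (hD ?_ (hf ij.2))
    exact Finset.HasAntidiagonal.antidiagonal.snd_le hij

variable {D : ℕ → Ideal R} {hD : Monotone D}

theorem mem_coeffIdeal {f : R[X]} : f ∈ coeffIdeal D hD ↔ ∀ k, f.coeff k ∈ D k := Iff.rfl

theorem X_pow_mul_C_mul_mem_coeffIdeal_iff {n : ℕ} {a : R} (ha : a ∈ D (n + 1)) (g : R[X]) :
    X ^ n * (C a * g) ∈ coeffIdeal D hD ↔ a * g.coeff 0 ∈ D n := by
  simp only [mem_coeffIdeal, coeff_X_pow_mul', coeff_C_mul]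
  refine ⟨fun h => by simpa using h n, fun h k => ?_⟩
  split_ifs with hnk
  · obtain rfl | hlt := hnk.eq_or_lt
    · simpa using h
    · exact Ideal.mul_mem_right _ _ (hD hlt ha)
  · exact zero_mem _

end CommSemiring

section CommRing

variable {R : Type*} [CommRing R]

theorem comap_constantCoeff_mem_associatedPrimes {D : ℕ → Ideal R} {hD : Monotone D} {n : ℕ}
    {a : R} (ha : a ∈ D (n + 1)) {p : Ideal R} [p.IsPrime] (hDn : ∀ c, a * c ∈ D n ↔ c ∈ p) :
    p.comap constantCoeff ∈ associatedPrimes R[X] (R[X] ⧸ coeffIdeal D hD) := by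
  have hcolon : p.comap constantCoeff = (⊥ : Submodule R[X] (R[X] ⧸ coeffIdeal D hD)).colon
      {Submodule.Quotient.mk (X ^ n * C a)} := by
    ext g
    rw [Submodule.mem_colon_singleton, Submodule.mem_bot, ← Submodule.Quotient.mk_smul,
      Submodule.Quotient.mk_eq_zero, smul_eq_mul,
      show g * (X ^ n * C a) = X ^ n * (C a * g) by ring,
      X_pow_mul_C_mul_mem_coeffIdeal_iff ha, hDn, Ideal.mem_comap, constantCoeff_apply]
  exact ⟨Ideal.IsPrime.comap _, _, by rw [← hcolon, (Ideal.IsPrime.comap _).radical]⟩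

theorem exists_infinite_associatedPrimes_quotient {I : ℕ → Ideal R} (hI : Monotone I)
    {p : ℕ → Ideal R} [∀ n, (p n).IsPrime] (hIp : ∀ n, I n ≤ p n) {a : ℕ → R}
    (haI : ∀ n, a n ∈ I (n + 1)) (hap : ∀ n, a n ∉ p n) :
    ∃ K : Ideal R[X], (associatedPrimes R[X] (R[X] ⧸ K)).Infinite := by
  set D : ℕ → Ideal R := fun n => Ideal.span {a n} * p n ⊔ I n
  have hDI : ∀ n, D n ≤ I (n + 1) := fun n =>
    sup_le (Ideal.mul_le_left.trans ((Ideal.span_singleton_le_iff_mem _).mpr (haI n)))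
      (hI n.le_succ)
  have hD : Monotone D := monotone_nat_of_le_succ fun n => (hDI n).trans le_sup_right
  have hp : Function.Injective p := .of_lt_imp_ne fun n m hnm hpnm =>
    hap n (hpnm ▸ hIp m (hI hnm (haI n)))
  refine ⟨coeffIdeal D hD, Set.infinite_of_injective_forall_mem
    ((Ideal.comap_injective_of_surjective _ constantCoeff_surjective).comp hp) fun n => ?_⟩
  exact comap_constantCoeff_mem_associatedPrimes
    ((le_sup_right : I (n + 1) ≤ D (n + 1)) (haI n))
    (Ideal.mul_mem_span_singleton_mul_sup_iff (hIp n) (hap n))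

theorem exists_infinite_associatedPrimes_quotient_of_strictMono {I : ℕ → Ideal R}
    (hrad : ∀ n, (I n).IsRadical) (hI : StrictMono I) :
    ∃ K : Ideal R[X], (associatedPrimes R[X] (R[X] ⧸ K)).Infinite := by
  choose a haI haI' using fun n : ℕ => SetLike.exists_of_lt (hI n.lt_succ_self)
  choose p hp hIp hap using fun n => (hrad n).exists_le_isPrime_notMem (haI' n)
  exact exists_infinite_associatedPrimes_quotient hI.monotone hIp haI hap

end CommRing

end Polynomial

/-- If the polynomial ring `R[X]` is a weakly Laskerian ring, then `Spec R` is a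
Noetherian topological space. -/
theorem noetherianSpace_of_weaklyLaskerian_polynomial {R : Type*} [CommRing R]
    (h : IsWeaklyLaskerian (Polynomial R) (Polynomial R)) :
    TopologicalSpace.NoetherianSpace (PrimeSpectrum R) :=
  PrimeSpectrum.noetherianSpace_of_forall_not_strictMono fun _ hrad hI =>
    have ⟨K, hK⟩ := exists_infinite_associatedPrimes_quotient_of_strictMono hrad hI
    hK (h K)
end

section
/- Let R be a commutative ring such that Spec R (with the Zariski topology) is a Noetherian topological space, and let I be a proper ideal of R. Then every prime ideal of R minimal over I is an associated prime of I in the Zariski-Samuel sense, i.e. Min I ⊆ ZS(I). -/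
/-!
As `Spec R` is Noetherian, among the closed sets `V(I : s)` with `s ∉ p` there is a minimal one,
`V(I : x)`. These sets are directed downward, because `V(I : st) ⊆ V(I : s) ∩ V(I : t)` and
`st ∉ p`, so `V(I : x)` lies in all of them: every `(I : s)` is contained in `√(I : x)`.
Minimality of `p` over `I` gives, for each `a ∈ p`, some `a ^ n * s ∈ I` with `s ∉ p`, whence
`p ≤ √(I : x)`; conversely `(I : x) ≤ p` because `x ∉ p`.
-/

open TopologicalSpace PrimeSpectrum

namespace Ideal

variable {R : Type*} [CommSemiring R]

theorem exists_pow_mul_mem_of_mem_minimalPrimes {I p : Ideal R} (hp : p ∈ I.minimalPrimes)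
    {a : R} (ha : a ∈ p) : ∃ n : ℕ, ∃ s ∉ p, a ^ n * s ∈ I := by
  have := hp.isPrime
  -- otherwise a prime over `I` avoiding `aⁿ s` (`s ∉ p`) would lie in `p` but not contain `a`
  by_contra! h
  have hdisj : Disjoint (I : Set R) ↑(Submonoid.powers a ⊔ p.primeCompl) := by
    refine Set.disjoint_right.mpr fun _ hy ↦ ?_
    obtain ⟨_, ⟨n, rfl⟩, s, hs, rfl⟩ := Submonoid.mem_sup.mp hy
    exact h n s hs
  obtain ⟨q, hq, hIq, hqM⟩ := exists_le_prime_disjoint I _ hdisj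
  have hqp : q ≤ p := fun y hyq ↦ by_contra fun hyp ↦
    Set.disjoint_left.mp hqM hyq (Submonoid.mem_sup_right (show y ∈ p.primeCompl from hyp))
  exact Set.disjoint_left.mp hqM (hp.2 ⟨hq, hIq⟩ hqp ha)
    (Submonoid.mem_sup_left (Submonoid.mem_powers a))

theorem colon_span_singleton_mono {I : Ideal R} {a b : R} (hab : a ∣ b) :
    I.colon (span {a}) ≤ I.colon (span {b}) := by
  obtain ⟨c, rfl⟩ := hab
  intro r hr
  rw [mem_colon_span_singleton] at hr ⊢
  simpa only [mul_assoc] using I.mul_mem_right c hr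

theorem colon_span_singleton_le_of_notMem {I p : Ideal R} [p.IsPrime] (hIp : I ≤ p) {x : R}
    (hx : x ∉ p) : I.colon (span {x}) ≤ p := fun r hr ↦
  ((‹p.IsPrime›.mem_or_mem (hIp (mem_colon_span_singleton.mp hr))).resolve_right hx)

theorem directedOn_colon_span_singleton_primeCompl (I p : Ideal R) [p.IsPrime] :
    DirectedOn (· ≤ ·) ((fun s ↦ I.colon (span {s})) '' (p.primeCompl : Set R)) := by
  refine directedOn_image.mpr fun s hs t ht ↦ ⟨s * t, p.primeCompl.mul_mem hs ht, ?_, ?_⟩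
  · exact colon_span_singleton_mono (dvd_mul_right s t)
  · exact colon_span_singleton_mono (dvd_mul_left t s)

theorem exists_le_radical_of_directedOn [NoetherianSpace (PrimeSpectrum R)]
    {S : Set (Ideal R)} (hdir : DirectedOn (· ≤ ·) S) (hne : S.Nonempty) :
    ∃ J ∈ S, ∀ K ∈ S, K ≤ J.radical := by
  let V : Ideal R → Closeds (PrimeSpectrum R) := fun J ↦ ⟨zeroLocus J, isClosed_zeroLocus _⟩
  obtain ⟨_, ⟨J, hJ, rfl⟩, hmin⟩ := wellFounded_lt.has_min (V '' S) (hne.image V)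
  refine ⟨J, hJ, fun K hK ↦ ?_⟩
  obtain ⟨L, hL, hJL, hKL⟩ := hdir J hJ K hK
  have hVL : V L = V J :=
    eq_of_le_of_not_lt (zeroLocus_anti_mono_ideal hJL) (hmin _ ⟨L, hL, rfl⟩)
  rw [← zeroLocus_subset_zeroLocus_iff]
  calc zeroLocus (J : Set R) = zeroLocus L := congrArg SetLike.coe hVL.symm
    _ ⊆ zeroLocus K := zeroLocus_anti_mono_ideal hKL

end Ideal

open Ideal in
theorem minimalPrimes_subset_zariskiSamuel_of_noetherianSpace_general {R : Type*} [CommRing R]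
    [TopologicalSpace.NoetherianSpace (PrimeSpectrum R)]
    (I : Ideal R) (p : Ideal R) (hp : p ∈ I.minimalPrimes) :
    ∃ x : R, p = (Submodule.colon I (Ideal.span {x})).radical := by
  have hp_prime := hp.isPrime
  obtain ⟨_, ⟨x, hx, rfl⟩, hx_max⟩ := exists_le_radical_of_directedOn
    (directedOn_colon_span_singleton_primeCompl I p) ⟨_, 1, p.primeCompl.one_mem, rfl⟩
  refine ⟨x, le_antisymm (fun a ha ↦ ?_) ?_⟩
  · obtain ⟨n, s, hs, has⟩ := exists_pow_mul_mem_of_mem_minimalPrimes hp ha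
    exact mem_radical_of_pow_mem (hx_max _ ⟨s, hs, rfl⟩ (mem_colon_span_singleton.mpr has))
  · exact hp_prime.radical_le_iff.mpr (colon_span_singleton_le_of_notMem hp.le hx)

/-- If `Spec R` is a Noetherian topological space and `I` is a proper ideal of `R`, then
every prime minimal over `I` is a Zariski–Samuel associated prime of `I`, i.e. it equals
the radical of the ideal quotient `(I : x)` for some `x ∈ R`. -/
theorem minimalPrimes_subset_zariskiSamuel_of_noetherianSpace {R : Type*} [CommRing R]
    [TopologicalSpace.NoetherianSpace (PrimeSpectrum R)]
    (I : Ideal R) (hI : I ≠ ⊤) (p : Ideal R) (hp : p ∈ I.minimalPrimes) :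
    ∃ x : R, p = (Submodule.colon I (Ideal.span {x})).radical :=
  minimalPrimes_subset_zariskiSamuel_of_noetherianSpace_general I p hp
end

section
/- Let R be a commutative ring and J an ideal of R with J² = 0, so that J carries a natural R/J-module structure. If the quotient ring R/J is a weakly Laskerian ring and J is weakly Laskerian as an R/J-module, then R is a weakly Laskerian ring. -/
/-- An ideal `J` with `J ^ 2 = 0` is torsion by `J`, so it carries a natural
`R ⧸ J`-module structure. -/
theorem isTorsionBySet_of_sq_eq_bot {R : Type*} [CommRing R] (J : Ideal R)
    (hJ2 : J ^ 2 = ⊥) : Module.IsTorsionBySet R J (J : Set R) := by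
  intro x a
  ext
  have : (a : R) * (x : R) ∈ J ^ 2 := by
    rw [pow_two]
    exact Ideal.mul_mem_mul a.2 x.2
  simpa using (Submodule.eq_bot_iff _).mp hJ2 _ this

/-! Weakly Laskerian modules are closed under surjective images and under extensions: for
`N, L ≤ M`, the associated primes of `M ⧸ L` lie among those of the image of `N` and those of a
quotient of `M ⧸ N`. Along a surjective ring map `R → S` the `R`- and `S`-submodules of an
`S`-module coincide and associated primes over `R` are pulled back from those over `S`, so
weakly Laskerian over `S` implies weakly Laskerian over `R`. As `J ^ 2 = 0`, both `J` and
`R ⧸ J` are `R ⧸ J`-modules, so `R` is an extension of two weakly Laskerian `R`-modules. -/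

section RestrictScalars

variable {R S M : Type*} [CommRing R] [CommRing S] [Algebra R S] [AddCommGroup M] [Module S M]
  [Module R M] [IsScalarTower R S M]

variable (S) in
theorem comap_radical_colon_bot (x : M) :
    ((⊥ : Submodule S M).colon {x}).radical.comap (algebraMap R S) =
      ((⊥ : Submodule R M).colon {x}).radical := by
  ext r
  simp only [Ideal.mem_comap, Ideal.mem_radical_iff, Submodule.mem_colon_singleton,
    Submodule.mem_bot, ← map_pow, algebraMap_smul]

theorem associatedPrimes_subset_image_comap (hRS : Function.Surjective (algebraMap R S)) :
    associatedPrimes R M ⊆ Ideal.comap (algebraMap R S) '' associatedPrimes S M := by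
  rintro p ⟨_, x, rfl⟩
  set q := ((⊥ : Submodule S M).colon {x}).radical
  have hq : q.IsPrime := by
    rw [← Ideal.map_comap_of_surjective _ hRS q, comap_radical_colon_bot S]
    refine Ideal.map_isPrime_of_surjective hRS ?_
    rw [← comap_radical_colon_bot S]
    exact Ideal.comap_mono bot_le
  exact ⟨q, ⟨hq, x, rfl⟩, comap_radical_colon_bot S x⟩

end RestrictScalars

namespace IsWeaklyLaskerian

variable {R M M' : Type*} [CommRing R] [AddCommGroup M] [Module R M] [AddCommGroup M']
  [Module R M']

theorem finite_associatedPrimes (h : IsWeaklyLaskerian R M) : (associatedPrimes R M).Finite := by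
  rw [← LinearEquiv.AssociatedPrimes.eq (Submodule.quotEquivOfEqBot ⊥ rfl)]
  exact h ⊥

theorem of_surjective (h : IsWeaklyLaskerian R M) (f : M →ₗ[R] M') (hf : Function.Surjective f) :
    IsWeaklyLaskerian R M' := fun N ↦ by
  have hfN : Function.Surjective (N.mkQ ∘ₗ f) := N.mkQ_surjective.comp hf
  rw [← LinearEquiv.AssociatedPrimes.eq ((N.mkQ ∘ₗ f).quotKerEquivOfSurjective hfN)]
  exact h _

theorem of_submodule_of_quotient (N : Submodule R M) (hN : IsWeaklyLaskerian R N)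
    (hQ : IsWeaklyLaskerian R (M ⧸ N)) : IsWeaklyLaskerian R M := fun L ↦ by
  set P := N.map L.mkQ
  have hP : (associatedPrimes R P).Finite :=
    (hN.of_surjective _ (L.mkQ.submoduleMap_surjective N)).finite_associatedPrimes
  have hLP : Function.Surjective (N.mapQ P L.mkQ (Submodule.le_comap_map _ _)) := by
    intro y
    obtain ⟨x, rfl⟩ := P.mkQ_surjective y
    obtain ⟨m, rfl⟩ := L.mkQ_surjective x
    exact ⟨N.mkQ m, rfl⟩
  have hQP : (associatedPrimes R ((M ⧸ L) ⧸ P)).Finite :=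
    (hQ.of_surjective _ hLP).finite_associatedPrimes
  exact (hP.union hQP).subset
    (associatedPrimes.subset_union_of_exact P.injective_subtype (LinearMap.exact_subtype_mkQ P))

theorem restrictScalars {S : Type*} [CommRing S] [Algebra R S] [Module S M] [IsScalarTower R S M]
    (hRS : Function.Surjective (algebraMap R S)) (h : IsWeaklyLaskerian S M) :
    IsWeaklyLaskerian R M := fun N ↦ by
  let N' : Submodule S M :=
    { N with
      smul_mem' := fun s x hx ↦ by
        obtain ⟨r, rfl⟩ := hRS s
        rw [algebraMap_smul]
        exact N.smul_mem r hx }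
  change (associatedPrimes R (M ⧸ N'.restrictScalars R)).Finite
  rw [LinearEquiv.AssociatedPrimes.eq (Submodule.Quotient.restrictScalarsEquiv R N')]
  exact ((h N').image _).subset (associatedPrimes_subset_image_comap hRS)

end IsWeaklyLaskerian

/-- Let `J` be an ideal of `R` with `J ^ 2 = 0`, so that `J` carries a natural
`R ⧸ J`-module structure. If the ring `R ⧸ J` is weakly Laskerian and `J` is weakly
Laskerian as an `R ⧸ J`-module, then the ring `R` is weakly Laskerian. -/
theorem isWeaklyLaskerian_of_sq_eq_bot {R : Type*} [CommRing R] (J : Ideal R)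
    (hJ2 : J ^ 2 = ⊥)
    (hq : IsWeaklyLaskerian (R ⧸ J) (R ⧸ J))
    (hJ : letI := (isTorsionBySet_of_sq_eq_bot J hJ2).module
      IsWeaklyLaskerian (R ⧸ J) J) :
    IsWeaklyLaskerian R R := by
  let := (isTorsionBySet_of_sq_eq_bot J hJ2).module
  exact .of_submodule_of_quotient J (hJ.restrictScalars Ideal.Quotient.mk_surjective)
    (hq.restrictScalars Ideal.Quotient.mk_surjective)
end

section
/- Let R be a Noetherian commutative ring and M a weakly Laskerian R-module. Then the trivial ring extension (idealization) R ⋉ M is a weakly Laskerian ring. -/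
open Submodule

namespace IsWeaklyLaskerian

variable {R M : Type*} [CommRing R] [AddCommGroup M] [Module R M]

theorem of_isNoetherian [IsNoetherianRing R] [Module.Finite R M] : IsWeaklyLaskerian R M :=
  fun N => associatedPrimes.finite R (M ⧸ N)

theorem of_exact {M' M'' : Type*} [AddCommGroup M'] [Module R M'] [AddCommGroup M'']
    [Module R M''] {f : M' →ₗ[R] M} {g : M →ₗ[R] M''} (hfg : Function.Exact f g)
    (h' : IsWeaklyLaskerian R M') (h'' : IsWeaklyLaskerian R M'') : IsWeaklyLaskerian R M := by
  intro K
  let f' := mapQ (K.comap f) K f le_rfl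
  let g' := mapQ K (K.map g) g (le_comap_map g K)
  have hf' : Function.Injective f' := by
    rw [← LinearMap.ker_eq_bot, ker_mapQ, mkQ_map_self]
  have hfg' : Function.Exact f' g' := (hfg.exact_mapQ_iff _ _).mpr inf_le_right
  exact ((h' _).union (h'' _)).subset (associatedPrimes.subset_union_of_exact hf' hfg')

end IsWeaklyLaskerian

section RestrictScalars

variable {R A Q : Type*} [CommRing R] [CommRing A] [Algebra R A] [AddCommGroup Q] [Module A Q]
  [Module R Q] [IsScalarTower R A Q]

theorem IsAssociatedPrime.comap_algebraMap {p : Ideal A} (hp : IsAssociatedPrime p Q) :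
    IsAssociatedPrime (p.comap (algebraMap R A)) Q := by
  obtain ⟨_, x, rfl⟩ := hp
  refine ⟨Ideal.comap_isPrime _ _, x, ?_⟩
  rw [Ideal.comap_radical]
  congr 1
  ext r
  simp only [Ideal.mem_comap, mem_colon_singleton, mem_bot, algebraMap_smul]

theorem associatedPrimes_finite_of_restrictScalars
    (hinj : Set.InjOn (Ideal.comap (algebraMap R A)) {p | p.IsPrime})
    (h : (associatedPrimes R Q).Finite) : (associatedPrimes A Q).Finite :=
  (h.subset (Set.image_subset_iff.mpr fun _ hp => hp.comap_algebraMap)).of_finite_image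
    (hinj.mono fun _ hp => hp.isPrime)

theorem IsWeaklyLaskerian.of_restrictScalars
    (hinj : Set.InjOn (Ideal.comap (algebraMap R A)) {p | p.IsPrime})
    (h : IsWeaklyLaskerian R Q) : IsWeaklyLaskerian A Q := fun N =>
  associatedPrimes_finite_of_restrictScalars hinj <| by
    rw [LinearEquiv.AssociatedPrimes.eq (Quotient.restrictScalarsEquiv R N).symm]
    exact h _

end RestrictScalars

namespace TrivSqZeroExt

variable {R M : Type*} [CommRing R] [AddCommGroup M] [Module R M] [Module Rᵐᵒᵖ M]
  [IsCentralScalar R M]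

theorem exact_inrHom_fstHom :
    Function.Exact (inrHom R M) (fstHom R R M).toLinearMap := by
  intro x
  refine ⟨fun hx => ⟨x.snd, ext hx.symm rfl⟩, ?_⟩
  rintro ⟨m, rfl⟩
  rfl

theorem isWeaklyLaskerian [IsNoetherianRing R] (hM : IsWeaklyLaskerian R M) :
    IsWeaklyLaskerian R (TrivSqZeroExt R M) :=
  IsWeaklyLaskerian.of_exact exact_inrHom_fstHom hM .of_isNoetherian

theorem comap_fstHom_comap_algebraMap {p : Ideal (TrivSqZeroExt R M)} (hp : p.IsPrime) :
    (p.comap (algebraMap R (TrivSqZeroExt R M))).comap (fstHom R R M) = p := by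
  ext x
  have hinr : (inr x.snd : TrivSqZeroExt R M) ∈ p :=
    hp.mem_of_pow_mem 2 (by rw [pow_two, inr_mul_inr]; exact p.zero_mem)
  conv_rhs => rw [← inl_fst_add_inr_snd_eq x]
  exact (p.add_mem_iff_left hinr).symm

theorem comap_algebraMap_injOn :
    Set.InjOn (Ideal.comap (algebraMap R (TrivSqZeroExt R M))) {p | p.IsPrime} := by
  intro p hp q hq hpq
  rw [← comap_fstHom_comap_algebraMap hp, hpq, comap_fstHom_comap_algebraMap hq]

end TrivSqZeroExt

/-- If `R` is a Noetherian commutative ring and `M` is a weakly Laskerian `R`-module, then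
the trivial ring extension (idealization) `R ⋉ M` is a weakly Laskerian ring. -/
theorem trivSqZeroExt_isWeaklyLaskerian_of_noetherian {R M : Type*} [CommRing R]
    [IsNoetherianRing R] [AddCommGroup M] [Module R M] [Module Rᵐᵒᵖ M]
    [IsCentralScalar R M] (hM : IsWeaklyLaskerian R M) :
    IsWeaklyLaskerian (TrivSqZeroExt R M) (TrivSqZeroExt R M) :=
  (TrivSqZeroExt.isWeaklyLaskerian hM).of_restrictScalars TrivSqZeroExt.comap_algebraMap_injOn
end

section
/- Let R be a nontrivial commutative ring with identity and let X₁, X₂, ... be a countably infinite set of indeterminates over R. Then the polynomial ring R[X₁, X₂, ...] in countably many variables is not a weakly Laskerian ring. -/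
theorem Ideal.mem_associatedPrimes_quotient_of_mul_mem_iff {A : Type*} [CommRing A]
    {I P : Ideal A} [P.IsPrime] {x : A} (h : ∀ r, r * x ∈ I ↔ r ∈ P) :
    P ∈ associatedPrimes A (A ⧸ I) := by
  refine ⟨‹_›, Submodule.Quotient.mk x, ?_⟩
  have hP : P = (⊥ : Submodule A (A ⧸ I)).colon {Submodule.Quotient.mk x} := by
    ext r
    rw [Submodule.mem_colon_singleton, Submodule.mem_bot, ← Submodule.Quotient.mk_smul,
      Submodule.Quotient.mk_eq_zero, smul_eq_mul, h]
  rw [← hP, Ideal.IsPrime.radical ‹_›]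

section SeparatedFamily

variable {ι A : Type*} [CommRing A] {B : ι → Type*} [∀ i, CommRing (B i)]
  (ψ : ∀ i, A →+* B i) {x : ι → A}

theorem ker_mem_associatedPrimes_quotient_ker_pi [∀ i, IsDomain (B i)]
    (hne : ∀ i, ψ i (x i) ≠ 0) (hzero : ∀ i j, i ≠ j → ψ j (x i) = 0) (i : ι) :
    RingHom.ker (ψ i) ∈ associatedPrimes A (A ⧸ RingHom.ker (RingHom.pi ψ)) := by
  have := RingHom.ker_isPrime (ψ i)
  refine Ideal.mem_associatedPrimes_quotient_of_mul_mem_iff (x := x i) fun r => ?_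
  simp only [RingHom.mem_ker, map_mul, funext_iff, Pi.mul_apply, RingHom.pi_apply, Pi.zero_apply]
  refine ⟨fun h => (mul_eq_zero.mp (h i)).resolve_right (hne i), fun h j => ?_⟩
  rcases eq_or_ne i j with rfl | hij
  · rw [h, zero_mul]
  · rw [hzero i j hij, mul_zero]

theorem injective_ker_of_separating (hne : ∀ i, ψ i (x i) ≠ 0)
    (hzero : ∀ i j, i ≠ j → ψ j (x i) = 0) : Function.Injective fun i => RingHom.ker (ψ i) := by
  intro i j hij
  by_contra hij'
  have hxj : x j ∈ RingHom.ker (ψ i) := hzero j i (Ne.symm hij')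
  exact hne j (by rwa [show RingHom.ker (ψ i) = RingHom.ker (ψ j) from hij] at hxj)

theorem not_isWeaklyLaskerian_of_separating [∀ i, IsDomain (B i)] [Infinite ι]
    (hne : ∀ i, ψ i (x i) ≠ 0) (hzero : ∀ i j, i ≠ j → ψ j (x i) = 0) :
    ¬ IsWeaklyLaskerian A A := fun h =>
  (h _).not_infinite <| Set.infinite_of_injective_forall_mem
    (injective_ker_of_separating ψ hne hzero)
    (ker_mem_associatedPrimes_quotient_ker_pi ψ hne hzero)

end SeparatedFamily

theorem MvPolynomial.not_isWeaklyLaskerian (σ R : Type*) [Infinite σ] [CommRing R]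
    [Nontrivial R] : ¬ IsWeaklyLaskerian (MvPolynomial σ R) (MvPolynomial σ R) := by
  classical
  obtain ⟨m, hm⟩ := Ideal.exists_maximal R
  exact not_isWeaklyLaskerian_of_separating
    (fun i => eval₂Hom (Ideal.Quotient.mk m) (Pi.single i 1)) (x := X)
    (fun i => by simp) (fun i j hij => by simp [hij])

/-- For any nontrivial commutative ring `R`, the polynomial ring `R[X₁, X₂, ...]` in
countably many indeterminates over `R` is not a weakly Laskerian ring. -/
theorem mvPolynomial_not_weaklyLaskerian {R : Type*} [CommRing R] [Nontrivial R] :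
    ¬ IsWeaklyLaskerian (MvPolynomial ℕ R) (MvPolynomial ℕ R) :=
  MvPolynomial.not_isWeaklyLaskerian ℕ R
end

section
/- Let R be a nontrivial commutative ring with identity and let X₁, X₂, ... be a countably infinite set of indeterminates over R. Then the power series ring R[[X₁, X₂, ...]] in countably many variables is not a weakly Laskerian ring. -/
section KernelFamily

variable {S ι : Type*} [CommRing S] {D : ι → Type*} [∀ i, CommRing (D i)]
  (ψ : ∀ i, S →+* D i)

lemma colon_mk_quotient_iInf_ker [∀ i, NoZeroDivisors (D i)] {x : S} {i : ι}
    (hx : ∀ j, ψ j x = 0 ↔ j ≠ i) :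
    (⊥ : Submodule S (S ⧸ ⨅ j, RingHom.ker (ψ j))).colon {Ideal.Quotient.mk _ x} =
      RingHom.ker (ψ i) := by
  ext f
  have hxi : ψ i x ≠ 0 := fun h => (hx i).mp h rfl
  rw [Submodule.mem_colon_singleton, Submodule.mem_bot, Algebra.smul_def,
    Ideal.Quotient.algebraMap_eq, ← map_mul, Ideal.Quotient.eq_zero_iff_mem, Ideal.mem_iInf]
  simp only [RingHom.mem_ker, map_mul, mul_eq_zero]
  refine ⟨fun h => (h i).resolve_right hxi, fun h j => ?_⟩
  by_cases hji : j = i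
  · exact .inl (hji ▸ h)
  · exact .inr ((hx j).mpr hji)

variable [∀ i, IsDomain (D i)]

lemma ker_mem_associatedPrimes_quotient_iInf_ker {x : S} {i : ι}
    (hx : ∀ j, ψ j x = 0 ↔ j ≠ i) :
    RingHom.ker (ψ i) ∈ associatedPrimes S (S ⧸ ⨅ j, RingHom.ker (ψ j)) := by
  have hprime := RingHom.ker_isPrime (ψ i)
  refine ⟨hprime, Ideal.Quotient.mk _ x, ?_⟩
  rw [colon_mk_quotient_iInf_ker ψ hx, hprime.radical]

lemma associatedPrimes_quotient_iInf_ker_infinite [Infinite ι] (x : ι → S)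
    (hx : ∀ i j, ψ j (x i) = 0 ↔ j ≠ i) :
    (associatedPrimes S (S ⧸ ⨅ j, RingHom.ker (ψ j))).Infinite := by
  refine Set.infinite_of_injective_forall_mem (f := fun i => RingHom.ker (ψ i)) ?_
    fun i => ker_mem_associatedPrimes_quotient_iInf_ker ψ (hx i)
  intro i j (hij : RingHom.ker (ψ i) = RingHom.ker (ψ j))
  by_contra hne
  have hxi : x i ∈ RingHom.ker (ψ j) := (hx i j).mpr (Ne.symm hne)
  exact (hx i i).mp (hij ▸ hxi :) rfl

end KernelFamily

namespace MvPowerSeries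

variable {σ : Type*}

lemma killCompl_punit_X_eq_zero_iff {R : Type*} [CommSemiring R] [Nontrivial R] (i j : σ) :
    killCompl (R := R) (Function.Embedding.punit j : Unit ↪ σ) (X i) = 0 ↔ j ≠ i := by
  by_cases hji : j = i
  · subst hji
    rw [show X j = X ((Function.Embedding.punit j : Unit ↪ σ) ()) from rfl, killCompl_X]
    simpa using nonZeroDivisors.ne_zero (X_mem_nonzeroDivisors (σ := Unit) (R := R) (i := ()))
  · simpa [hji] using killCompl_X_eq_zero (R := R)
      (e := (Function.Embedding.punit j : Unit ↪ σ)) (t := i) fun ⟨_, h⟩ => hji h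

variable {R : Type*} [CommRing R]

noncomputable def killComplModIdeal (p : Ideal R) (i : σ) :
    MvPowerSeries σ R →+* PowerSeries (R ⧸ p) :=
  (killCompl (Function.Embedding.punit i : Unit ↪ σ)).toRingHom.comp (map (Ideal.Quotient.mk p))

lemma killComplModIdeal_X_eq_zero_iff (p : Ideal R) [p.IsPrime] (i j : σ) :
    killComplModIdeal p j (X i) = 0 ↔ j ≠ i := by
  simp only [killComplModIdeal, RingHom.comp_apply, map_X, AlgHom.toRingHom_eq_coe,
    RingHom.coe_coe]
  exact killCompl_punit_X_eq_zero_iff i j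

end MvPowerSeries

/-- For any nontrivial commutative ring `R`, the power series ring `R[[X₁, X₂, ...]]` in
countably many indeterminates over `R` is not a weakly Laskerian ring. -/
theorem mvPowerSeries_not_weaklyLaskerian {R : Type*} [CommRing R] [Nontrivial R] :
    ¬ IsWeaklyLaskerian (MvPowerSeries ℕ R) (MvPowerSeries ℕ R) := by
  obtain ⟨p, hp⟩ := Ideal.exists_maximal R
  exact fun h => associatedPrimes_quotient_iInf_ker_infinite (MvPowerSeries.killComplModIdeal p)
    MvPowerSeries.X (MvPowerSeries.killComplModIdeal_X_eq_zero_iff p) (h _)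
end

section
/- Let R be a commutative ring, n a positive integer, and A = R[X₁, ..., Xₙ] the polynomial ring in n indeterminates over R. Then the set of associated primes of A as a module over itself equals { pA : p is an associated prime of R as a module over itself }, where pA denotes the extension of the prime ideal p of R to A. -/
/-!
Associated primes are here radicals `√(0 : f)` of annihilators of single elements. Since
`R[X₁, …, Xₙ₊₁] ≃ R[X₁, …, Xₙ][X]`, it suffices to treat one variable. Let `I = √(0 : f)` be
prime in `R[X]` and `a` the leading coefficient of `f`. If some `b` with `b a = 0` is not in `I`,
then `√(0 : b f) = I` and `b f` has smaller degree, so by induction on the degree we may assume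
that every such `b` lies in `I`. Then `√(0 : a) = I ∩ R`, and comparing top coefficients in
`g ^ k f = 0` shows that this ideal also contains the leading coefficient of every `g ∈ I`;
stripping leading terms then gives `I = (I ∩ R)[X]`.
-/

open Polynomial Submodule

section CommSemiring

variable {R : Type*} [CommSemiring R]

theorem Submodule.mem_radical_bot_colon_singleton {M : Type*} [AddCommMonoid M] [Module R M]
    {x : M} {r : R} :
    r ∈ ((⊥ : Submodule R M).colon {x}).radical ↔ ∃ k : ℕ, r ^ k • x = 0 := by
  simp only [Ideal.mem_radical_iff, mem_colon_singleton, mem_bot]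

theorem Submodule.radical_bot_colon_smul_of_notMem {M : Type*} [AddCommMonoid M] [Module R M]
    {x : M} {r : R} (hp : ((⊥ : Submodule R M).colon {x}).radical.IsPrime)
    (hr : r ∉ ((⊥ : Submodule R M).colon {x}).radical) :
    ((⊥ : Submodule R M).colon {r • x}).radical = ((⊥ : Submodule R M).colon {x}).radical := by
  ext s
  simp only [mem_radical_bot_colon_singleton, smul_smul]
  constructor
  · rintro ⟨k, hk⟩
    have hsr : s ^ k * r ∈ ((⊥ : Submodule R M).colon {x}).radical :=
      mem_radical_bot_colon_singleton.2 ⟨1, by rw [pow_one, hk]⟩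
    exact mem_radical_bot_colon_singleton.1
      (hp.mem_of_pow_mem k ((hp.mem_or_mem hsr).resolve_right hr))
  · rintro ⟨k, hk⟩
    exact ⟨k, by rw [mul_comm, ← smul_smul, hk, smul_zero]⟩

theorem RingEquiv.isAssociatedPrime_map {S : Type*} [CommSemiring S] (e : R ≃+* S)
    {I : Ideal R} (h : IsAssociatedPrime I R) : IsAssociatedPrime (I.map (e : R →+* S)) S := by
  obtain ⟨hI, x, rfl⟩ := h
  refine ⟨Ideal.map_isPrime_of_equiv e, e x, ?_⟩
  ext s
  rw [Ideal.map_comap_of_equiv, Ideal.mem_comap, mem_radical_bot_colon_singleton,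
    mem_radical_bot_colon_singleton]
  refine exists_congr fun k => ?_
  rw [smul_eq_mul, smul_eq_mul, ← e.injective.eq_iff, map_mul, map_pow, map_zero,
    e.apply_symm_apply]

theorem RingEquiv.associatedPrimes_eq_image_map {S : Type*} [CommSemiring S] (e : R ≃+* S) :
    associatedPrimes S S = Ideal.map (e : R →+* S) '' associatedPrimes R R := by
  refine subset_antisymm (fun J hJ => ⟨_, e.symm.isAssociatedPrime_map hJ, ?_⟩) ?_
  · rintro _ ⟨I, hI, rfl⟩
    exact e.isAssociatedPrime_map hI
  · simpa using Ideal.map_of_equiv e.symm (I := J)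

theorem Polynomial.natDegree_C_mul_lt {b : R} {f : R[X]} (hb : b * f.leadingCoeff = 0)
    (hbf : C b * f ≠ 0) : (C b * f).natDegree < f.natDegree := by
  refine (natDegree_C_mul_le b f).lt_of_ne fun h => hbf (leadingCoeff_eq_zero.1 ?_)
  rwa [leadingCoeff, h, coeff_C_mul]

theorem Polynomial.comap_C_le_leadingCoeff (I : Ideal R[X]) : I.comap C ≤ I.leadingCoeff :=
  fun b hb => (I.mem_leadingCoeff b).2 ⟨C b, hb, leadingCoeff_C b⟩

theorem Polynomial.leadingCoeff_radical_bot_colon_le (f : R[X]) :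
    ((⊥ : Submodule R[X] R[X]).colon {f}).radical.leadingCoeff ≤
      ((⊥ : Submodule R R).colon {f.leadingCoeff}).radical := by
  intro b hb
  obtain ⟨g, hg, rfl⟩ := (Ideal.mem_leadingCoeff _ _).1 hb
  obtain ⟨k, hk⟩ := mem_radical_bot_colon_singleton.1 hg
  refine mem_radical_bot_colon_singleton.2 ⟨k, ?_⟩
  rw [smul_eq_mul] at hk ⊢
  rw [leadingCoeff, ← coeff_pow_of_natDegree_le le_rfl, ← coeff_natDegree,
    ← coeff_mul_add_eq_of_natDegree_le (natDegree_pow_le_of_le k le_rfl) le_rfl, hk,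
    coeff_zero]

end CommSemiring

namespace Polynomial

variable {R : Type*} [CommRing R]

theorem map_C_radical_bot_colon {a : R} (hp : ((⊥ : Submodule R R).colon {a}).radical.IsPrime) :
    Ideal.map C ((⊥ : Submodule R R).colon {a}).radical =
      ((⊥ : Submodule R[X] R[X]).colon {C a}).radical := by
  refine le_antisymm (Ideal.map_le_iff_le_comap.2 fun b hb => ?_) ?_
  · obtain ⟨k, hk⟩ := mem_radical_bot_colon_singleton.1 hb
    refine mem_radical_bot_colon_singleton.2 ⟨k, ?_⟩
    rw [smul_eq_mul] at hk ⊢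
    rw [← map_pow, ← map_mul, hk, map_zero]
  · rw [Ideal.isPrime_map_C_of_isPrime.radical_le_iff]
    intro g hg
    rw [mem_colon_singleton, mem_bot, smul_eq_mul] at hg
    refine Ideal.mem_map_C_iff.2 fun n => Ideal.le_radical ?_
    rw [mem_colon_singleton, mem_bot, smul_eq_mul, ← coeff_mul_C, hg, coeff_zero]

theorem radical_bot_colon_eq_map_C {f : R[X]}
    (hI : ((⊥ : Submodule R[X] R[X]).colon {f}).radical.IsPrime)
    (hf : ∀ b, b * f.leadingCoeff = 0 → C b ∈ ((⊥ : Submodule R[X] R[X]).colon {f}).radical) :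
    ((⊥ : Submodule R[X] R[X]).colon {f}).radical =
      Ideal.map C ((⊥ : Submodule R R).colon {f.leadingCoeff}).radical := by
  set I := ((⊥ : Submodule R[X] R[X]).colon {f}).radical
  set p := ((⊥ : Submodule R R).colon {f.leadingCoeff}).radical
  have hpI : p ≤ I.comap C := fun b hb => by
    obtain ⟨k, hk⟩ := mem_radical_bot_colon_singleton.1 hb
    exact hI.mem_of_pow_mem k (by rw [← map_pow]; exact hf _ hk)
  have hlc : I.leadingCoeff = I.comap C :=
    le_antisymm ((leadingCoeff_radical_bot_colon_le f).trans hpI) (comap_C_le_leadingCoeff I)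
  have hIp : I.comap C = p := le_antisymm (hlc ▸ leadingCoeff_radical_bot_colon_le f) hpI
  rw [← hIp, Ideal.map_C_comap_of_comap_eq_leadingCoeff I hlc.symm]

theorem associatedPrimes_eq_image_map_C :
    associatedPrimes R[X] R[X] = Ideal.map C '' associatedPrimes R R := by
  refine subset_antisymm ?_ ?_
  · rintro _ ⟨hI, f, rfl⟩
    induction hn : f.natDegree using Nat.strong_induction_on generalizing f with | _ n ih
    by_cases! h :
      ∃ b, b * f.leadingCoeff = 0 ∧ C b ∉ ((⊥ : Submodule R[X] R[X]).colon {f}).radical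
    · obtain ⟨b, hb, hbI⟩ := h
      have hbf : C b * f ≠ 0 := fun h0 =>
        hbI (Ideal.le_radical (by rw [mem_colon_singleton, mem_bot, smul_eq_mul, h0]))
      have hrad := radical_bot_colon_smul_of_notMem hI hbI
      rw [← hrad]
      exact ih _ (hn ▸ natDegree_C_mul_lt hb hbf) (C b * f) (hrad ▸ hI) rfl
    · have hIp := radical_bot_colon_eq_map_C hI h
      rw [hIp] at hI ⊢
      exact ⟨_, ⟨(Ideal.isPrime_map_C_iff_isPrime _).1 hI, f.leadingCoeff, rfl⟩, rfl⟩
  · rintro _ ⟨p, ⟨hp, a, rfl⟩, rfl⟩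
    exact ⟨Ideal.isPrime_map_C_of_isPrime, C a, map_C_radical_bot_colon hp⟩

end Polynomial

theorem associatedPrimes_mvPolynomial_general {R : Type*} [CommRing R] (n : ℕ) :
    associatedPrimes (MvPolynomial (Fin n) R) (MvPolynomial (Fin n) R) =
      (fun p : Ideal R => p.map (MvPolynomial.C : R →+* MvPolynomial (Fin n) R)) ''
        associatedPrimes R R := by
  induction n with
  | zero =>
    rw [(MvPolynomial.isEmptyRingEquiv R (Fin 0)).symm.associatedPrimes_eq_image_map,
      ← RingEquiv.toRingHom_eq_coe, MvPolynomial.isEmptyRingEquiv_symm_toRingHom]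
  | succ n ih =>
    rw [(MvPolynomial.finSuccEquiv R n).toRingEquiv.symm.associatedPrimes_eq_image_map,
      Polynomial.associatedPrimes_eq_image_map_C, ih, Set.image_image, Set.image_image,
      ← MvPolynomial.finSuccEquiv_comp_C_eq_C]
    simp only [Ideal.map_map]
    rfl

/-- For a commutative ring `R` and a positive integer `n`, the associated primes of the
polynomial ring `A = R[X₁, …, Xₙ]` as a module over itself are exactly the extensions
`pA` of the associated primes `p` of `R` as a module over itself. -/
theorem associatedPrimes_mvPolynomial {R : Type*} [CommRing R] (n : ℕ) (hn : 0 < n) :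
    associatedPrimes (MvPolynomial (Fin n) R) (MvPolynomial (Fin n) R) =
      (fun p : Ideal R => p.map (MvPolynomial.C : R →+* MvPolynomial (Fin n) R)) ''
        associatedPrimes R R :=
  associatedPrimes_mvPolynomial_general n
end

section
/- Let R be a commutative ring, X an indeterminate over R, A = R[X] the polynomial ring, J an ideal of A, q an associated prime of the A-module A/J, and p = q ∩ R. For each integer k ≥ 0, let a_k denote the set of all a ∈ R for which there exists a polynomial of the form a₀ + a₁X + ⋯ + a_{k-1}X^{k-1} + aX^k in J. Then a₀ ⊆ a₁ ⊆ a₂ ⊆ ⋯ is an ascending chain of ideals of R, and there exists an integer n ≥ 0 such that p is an associated prime of the R-module R/a_n. -/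
/-!
Pick `g ∈ R[X]` of least degree with `q = √(J : g)`, and let `n = natDegree g`, `c` its leading
coefficient. Then `p = √(aₙ : c)`. If `rᵏ c ∈ aₙ` is witnessed by `h ∈ J` of degree `≤ n` but
`r ∉ p`, then `rᵏ g - h` has smaller degree, and since `rᵏ ∉ q` and `q` is prime, `q` is still
the radical of its annihilator modulo `J`, contradicting minimality.
-/

open Polynomial

namespace Submodule

variable {R M : Type*} [CommSemiring R] [AddCommMonoid M] [Module R M]

theorem mem_radical_colon_bot_singleton {x : M} {r : R} :
    r ∈ ((⊥ : Submodule R M).colon {x}).radical ↔ ∃ k : ℕ, r ^ k • x = 0 := by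
  simp only [Ideal.mem_radical_iff, mem_colon_singleton, mem_bot]

theorem ne_zero_of_isPrime_radical_colon_bot_singleton {x : M}
    (hx : ((⊥ : Submodule R M).colon {x}).radical.IsPrime) : x ≠ 0 := by
  rintro rfl
  exact hx.ne_top <| (Ideal.eq_top_iff_one _).2 <|
    mem_radical_colon_bot_singleton.2 ⟨0, smul_zero _⟩

theorem radical_colon_bot_singleton_smul_of_notMem {I : Ideal R} (hI : I.IsPrime) {x : M}
    (hx : I = ((⊥ : Submodule R M).colon {x}).radical) {s : R} (hs : s ∉ I) :
    I = ((⊥ : Submodule R M).colon {s • x}).radical := by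
  ext t
  rw [mem_radical_colon_bot_singleton]
  constructor
  · intro ht
    obtain ⟨k, hk⟩ := mem_radical_colon_bot_singleton.1 (hx ▸ ht)
    exact ⟨k, by rw [smul_comm, hk, smul_zero]⟩
  · rintro ⟨k, hk⟩
    have hts : t ^ k * s ∈ I :=
      hx ▸ mem_radical_colon_bot_singleton.2 ⟨1, by rwa [pow_one, mul_smul]⟩
    exact hI.mem_of_pow_mem k ((hI.mem_or_mem hts).resolve_right hs)

end Submodule

theorem Ideal.Quotient.mem_radical_colon_bot_mk_iff {A : Type*} [CommRing A] {I : Ideal A}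
    {x r : A} : r ∈ ((⊥ : Submodule A (A ⧸ I)).colon {Ideal.Quotient.mk I x}).radical ↔
      ∃ k : ℕ, r ^ k * x ∈ I := by
  rw [Submodule.mem_radical_colon_bot_singleton]
  exact exists_congr fun _ ↦ Ideal.Quotient.eq_zero_iff_mem

namespace Polynomial

variable {R : Type*} [CommRing R]

theorem degree_C_mul_sub_lt {g h : R[X]} {s : R} (hg : g ≠ 0) (hh : h.degree ≤ g.natDegree)
    (hcoeff : h.coeff g.natDegree = s * g.leadingCoeff) : (C s * g - h).degree < g.degree := by
  rw [degree_eq_natDegree hg, degree_lt_iff_coeff_zero]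
  intro m hm
  rcases hm.lt_or_eq with hm | rfl
  · have hgm : g.coeff m = 0 := coeff_eq_zero_of_natDegree_lt (by exact_mod_cast hm)
    have hhm : h.coeff m = 0 := coeff_eq_zero_of_degree_lt (hh.trans_lt (by exact_mod_cast hm))
    rw [coeff_sub, coeff_C_mul, hgm, hhm, mul_zero, sub_zero]
  · rw [coeff_sub, coeff_C_mul, hcoeff, leadingCoeff, sub_self]

end Polynomial

namespace Ideal

variable {R : Type*} [CommRing R]

theorem restrictScalars_inf_degreeLE (I : Ideal R[X]) (n : WithBot ℕ) :
    I.restrictScalars R ⊓ Polynomial.degreeLE R n = I.degreeLE n :=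
  inf_comm _ _

theorem mem_leadingCoeffNth_iff_exists_coeff {I : Ideal R[X]} {n : ℕ} {x : R} :
    x ∈ I.leadingCoeffNth n ↔ ∃ p ∈ I, p.degree ≤ n ∧ p.coeff n = x := by
  simp only [leadingCoeffNth, degreeLE, Submodule.mem_map, lcoeff_apply, Submodule.mem_inf,
    mem_degreeLE]
  exact ⟨fun ⟨p, ⟨hp, hpI⟩, hpx⟩ ↦ ⟨p, hpI, hp, hpx⟩,
    fun ⟨p, hpI, hp, hpx⟩ ↦ ⟨p, ⟨hp, hpI⟩, hpx⟩⟩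

theorem C_mul_mem_leadingCoeffNth {I : Ideal R[X]} {g : R[X]} {a : R} (h : C a * g ∈ I) :
    a * g.leadingCoeff ∈ I.leadingCoeffNth g.natDegree :=
  mem_leadingCoeffNth_iff_exists_coeff.2
    ⟨C a * g, h, degree_le_of_natDegree_le (natDegree_C_mul_le _ _), coeff_C_mul _⟩

theorem comap_C_eq_radical_colon_leadingCoeff {J q : Ideal R[X]} (hq : q.IsPrime) {g : R[X]}
    (hg : q = ((⊥ : Submodule R[X] (R[X] ⧸ J)).colon {Quotient.mk J g}).radical)
    (hmin : ∀ g' : R[X],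
      q = ((⊥ : Submodule R[X] (R[X] ⧸ J)).colon {Quotient.mk J g'}).radical →
        g.degree ≤ g'.degree) :
    q.comap C = ((⊥ : Submodule R (R ⧸ J.leadingCoeffNth g.natDegree)).colon
      {Quotient.mk _ g.leadingCoeff}).radical := by
  ext r
  rw [mem_comap, Quotient.mem_radical_colon_bot_mk_iff]
  constructor
  · intro hr
    obtain ⟨k, hk⟩ := Quotient.mem_radical_colon_bot_mk_iff.1 (hg ▸ hr)
    exact ⟨k, C_mul_mem_leadingCoeffNth (by rwa [C_pow])⟩
  · rintro ⟨k, hk⟩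
    by_contra hr
    have hs : C (r ^ k) ∉ q := by
      rw [C_pow]
      exact fun h ↦ hr (hq.mem_of_pow_mem k h)
    obtain ⟨h, hJ, hdeg, hcoeff⟩ := mem_leadingCoeffNth_iff_exists_coeff.1 hk
    have hg0 : g ≠ 0 := by
      rintro rfl
      exact Submodule.ne_zero_of_isPrime_radical_colon_bot_singleton (hg ▸ hq) (map_zero _)
    have hmk : Quotient.mk J (C (r ^ k) * g - h) = C (r ^ k) • Quotient.mk J g := by
      rw [map_sub, Quotient.eq_zero_iff_mem.2 hJ, sub_zero]
      rfl
    have hg' := Submodule.radical_colon_bot_singleton_smul_of_notMem hq hg hs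
    rw [← hmk] at hg'
    exact (hmin _ hg').not_gt (degree_C_mul_sub_lt hg0 hdeg hcoeff)

end Ideal

/-- Let `J` be an ideal of `A = R[X]`, `q` an associated prime of the `A`-module `A ⧸ J`
and `p = q ∩ R`.  For `k ≥ 0` let `a k` be the ideal of all `a ∈ R` for which some
polynomial of the form `a₀ + a₁X + ⋯ + a_(k-1)X^(k-1) + aX^k` lies in `J` (i.e. the image
under the `k`-th coefficient map of the polynomials in `J` of degree at most `k`).  Then
the `a k` form an ascending chain of ideals of `R`, and `p` is an associated prime of
`R ⧸ a n` for some `n ≥ 0`. -/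
theorem exists_associated_prime_of_coeff_ideals {R : Type*} [CommRing R]
    (J : Ideal (Polynomial R)) (q : Ideal (Polynomial R))
    (hq : q ∈ associatedPrimes (Polynomial R) (Polynomial R ⧸ J))
    (p : Ideal R) (hp : p = q.comap (Polynomial.C : R →+* Polynomial R))
    (a : ℕ → Ideal R)
    (ha : ∀ k : ℕ, a k = Submodule.map (Polynomial.lcoeff R k)
      (J.restrictScalars R ⊓ Polynomial.degreeLE R (k : WithBot ℕ))) :
    Monotone a ∧ ∃ n : ℕ, p ∈ associatedPrimes R (R ⧸ a n) := by
  subst hp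
  obtain rfl : a = J.leadingCoeffNth := funext fun k ↦ by
    rw [ha, Ideal.restrictScalars_inf_degreeLE]; rfl
  refine ⟨fun _ _ ↦ J.leadingCoeffNth_mono, ?_⟩
  obtain ⟨hq, x, hx⟩ := hq
  let S := {g : R[X] |
    q = ((⊥ : Submodule R[X] (R[X] ⧸ J)).colon {Ideal.Quotient.mk J g}).radical}
  have hS : S.Nonempty := by
    obtain ⟨g, rfl⟩ := Ideal.Quotient.mk_surjective x
    exact ⟨g, hx⟩
  let g := Function.argminOn degree S hS
  exact ⟨g.natDegree, hq.comap C, _, Ideal.comap_C_eq_radical_colon_leadingCoeff hq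
    (Function.argminOn_mem _ S hS) fun _ hg' ↦ Function.argminOn_le degree S hg'⟩
end

section
/- Let R be a weakly Laskerian commutative ring and A a commutative R-algebra (e.g. a ring extension of R) that is finitely generated as an R-module. Then A is a weakly Laskerian ring. -/
namespace IsWeaklyLaskerian

variable {R M M' : Type*} [CommRing R] [AddCommGroup M] [Module R M] [AddCommGroup M']
  [Module R M']

theorem of_subsingleton [Subsingleton M] : IsWeaklyLaskerian R M := fun _ => by
  simp only [associatedPrimes.eq_empty_of_subsingleton, Set.finite_empty]

theorem prod (h : IsWeaklyLaskerian R M) (h' : IsWeaklyLaskerian R M') :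
    IsWeaklyLaskerian R (M × M') := by
  intro N
  set K := LinearMap.range (N.mkQ ∘ₗ LinearMap.inl R M M')
  have hK : (associatedPrimes R K).Finite :=
    (h.of_surjective _ (LinearMap.surjective_rangeRestrict _)).finite_associatedPrimes
  have hsurj : Function.Surjective (K.mkQ ∘ₗ N.mkQ ∘ₗ LinearMap.inr R M M') := by
    intro y
    obtain ⟨⟨m, m'⟩, rfl⟩ := (K.mkQ_surjective.comp N.mkQ_surjective) y
    refine ⟨m', (Submodule.Quotient.eq K).mpr ⟨-m, ?_⟩⟩
    simp [← Submodule.Quotient.mk_sub]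
  have hQ : (associatedPrimes R (_ ⧸ K)).Finite :=
    (h'.of_surjective _ hsurj).finite_associatedPrimes
  exact (hK.union hQ).subset
    (associatedPrimes.subset_union_of_exact K.injective_subtype (LinearMap.exact_subtype_mkQ K))

theorem pi_fin (hR : IsWeaklyLaskerian R R) : ∀ n : ℕ, IsWeaklyLaskerian R (Fin n → R)
  | 0 => of_subsingleton
  | n + 1 => (hR.prod (pi_fin hR n)).of_surjective _ (Fin.consLinearEquiv R _).surjective

theorem of_finite (hR : IsWeaklyLaskerian R R) (M : Type*) [AddCommGroup M] [Module R M]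
    [Module.Finite R M] : IsWeaklyLaskerian R M := by
  obtain ⟨n, f, hf⟩ := Module.Finite.exists_fin' R M
  exact (hR.pi_fin n).of_surjective f hf

end IsWeaklyLaskerian

theorem IsAssociatedPrime.comap_algebraMap_s17 {R A M : Type*} [CommSemiring R]
    [CommSemiring A] [Algebra R A] [AddCommMonoid M] [Module R M] [Module A M]
    [IsScalarTower R A M] {P : Ideal A} (h : IsAssociatedPrime P M) :
    IsAssociatedPrime (P.comap (algebraMap R A)) M := by
  obtain ⟨hP, x, rfl⟩ := h
  refine ⟨hP.comap _, x, ?_⟩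
  rw [Ideal.comap_radical]
  congr 1
  ext r
  simp only [Ideal.mem_comap, Submodule.mem_colon_singleton, Submodule.mem_bot, algebraMap_smul]

section QuasiFinite

variable {R A M : Type*} [CommRing R] [CommRing A] [Algebra R A] [Algebra.QuasiFinite R A]
  [AddCommGroup M] [Module R M] [Module A M] [IsScalarTower R A M]

theorem associatedPrimes.finite_of_quasiFinite (h : (associatedPrimes R M).Finite) :
    (associatedPrimes A M).Finite :=
  (h.biUnion fun p _ => Algebra.QuasiFinite.finite_primesOver p).subset fun _ hP =>
    Set.mem_biUnion hP.comap_algebraMap_s17 ⟨hP.isPrime, ⟨rfl⟩⟩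

theorem IsWeaklyLaskerian.of_tower (h : IsWeaklyLaskerian R M) : IsWeaklyLaskerian A M :=
  fun N => associatedPrimes.finite_of_quasiFinite (R := R)
    (LinearEquiv.AssociatedPrimes.eq (Submodule.Quotient.restrictScalarsEquiv R N) ▸
      h (N.restrictScalars R))

end QuasiFinite

/-- If `R` is a weakly Laskerian commutative ring and `A` is a commutative `R`-algebra
which is finitely generated as an `R`-module, then `A` is a weakly Laskerian ring. -/
theorem isWeaklyLaskerian_of_finite_algebra {R A : Type*} [CommRing R] [CommRing A]
    [Algebra R A] [Module.Finite R A] (hR : IsWeaklyLaskerian R R) :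
    IsWeaklyLaskerian A A :=
  (hR.of_finite A).of_tower
end

section
/- Let R be a Noetherian commutative ring, M a weakly Laskerian R-module, and T a Noetherian commutative R-algebra that has only finitely many maximal ideals and is integral over R. Then M ⊗_R T is a weakly Laskerian T-module. -/
/-- The `T`-module structure on `M ⊗[R] T`, obtained by transporting the standard
`T`-module structure on `T ⊗[R] M` along the commutativity isomorphism. -/
noncomputable def tensorRightModule (R M T : Type*) [CommRing R] [AddCommGroup M]
    [Module R M] [CommRing T] [Algebra R T] : Module T (TensorProduct R M T) :=
  letI e : TensorProduct R M T ≃+ TensorProduct R T M := (TensorProduct.comm R M T).toAddEquiv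
  letI : SMul T (TensorProduct R M T) := ⟨fun t x => e.symm (t • e x)⟩
  Function.Injective.module T e.toAddMonoidHom e.injective
    (fun t x => show e (e.symm (t • e x)) = t • e x by simp)

/-!
Over a Noetherian ring, `M` is weakly Laskerian iff some finitely generated `N ≤ M` has
`Supp (M ⧸ N)` finite. For the hard direction, take a finitely generated `N` with
`⋂ Ass (M ⧸ N)` maximal. Then every minimal prime `p` of `Supp (M ⧸ N)` stays associated to
`M ⧸ N'` for all finitely generated `N' ⊇ N`. If infinitely many primes contained `p`, we could
choose a sequence `f k` of them with `f i ⊄ f j` for `i < j` and adjoin `f k • x k` step by step,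
making every `f k` associated to one single quotient of `M`.

Base change to `T` keeps the finitely generated part finitely generated and sends `Supp (M ⧸ N)`
to its preimage in `Spec T`. That preimage is finite: a prime of `T` over `p` is minimal over
`p T` because `T` is integral, and `T` is Noetherian.
-/

open Submodule

theorem Set.Infinite.exists_seq_forall_lt_not_le {α : Type*} [PartialOrder α] [WellFoundedGT α]
    {s : Set α} (hs : s.Infinite) :
    ∃ f : ℕ → α, (∀ n, f n ∈ s) ∧ ∀ i j, i < j → ¬ f i ≤ f j := by
  by_contra! H
  have hpwo : s.IsPWO := fun f => H (fun n => f n) (fun n => (f n).2)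
  obtain ⟨g, hg⟩ := hpwo.exists_monotone_subseq (f := fun n => hs.natEmbedding s n)
    (fun n => (hs.natEmbedding s n).2)
  refine not_strictMono_of_wellFoundedGT _ (hg.strictMono_of_injective ?_)
  exact Subtype.val_injective.comp ((hs.natEmbedding s).injective.comp g.injective)

section AssociatedPrimes

variable {R X : Type*} [CommRing R] [AddCommGroup X] [Module R X]

theorem Submodule.bot_colon_mk (N : Submodule R X) (x : X) :
    (⊥ : Submodule R (X ⧸ N)).colon {Submodule.Quotient.mk x} = N.colon {x} := by
  ext r
  rw [mem_colon_singleton, mem_colon_singleton, mem_bot, ← Quotient.mk_smul, Quotient.mk_eq_zero]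

theorem IsAssociatedPrime.mem_support {p : Ideal R} (h : IsAssociatedPrime p X) :
    ⟨p, h.isPrime⟩ ∈ Module.support R X := by
  obtain ⟨-, x, rfl⟩ := h
  exact Module.mem_support_iff_exists_annihilator.mpr
    ⟨x, (bot_colon' (S := {x})).ge.trans Ideal.le_radical⟩

variable [IsNoetherianRing R]

theorem isAssociatedPrime_of_mem_minimalPrimes_annihilator {x : X} {p : Ideal R}
    (hp : p ∈ (R ∙ x).annihilator.minimalPrimes) : IsAssociatedPrime p X := by
  rw [← bot_colon'] at hp
  obtain ⟨x', rfl⟩ := exists_eq_colon_of_mem_minimalPrimes hp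
  exact isAssociatedPrime_iff.mpr ⟨hp.isPrime, x', rfl⟩

theorem exists_isAssociatedPrime_le_of_mem_support {q : PrimeSpectrum R}
    (hq : q ∈ Module.support R X) : ∃ p, IsAssociatedPrime p X ∧ p ≤ q.asIdeal := by
  obtain ⟨x, hx⟩ := Module.mem_support_iff_exists_annihilator.mp hq
  obtain ⟨p, hp, hpq⟩ := Ideal.exists_minimalPrimes_le hx
  exact ⟨p, isAssociatedPrime_of_mem_minimalPrimes_annihilator hp, hpq⟩

theorem isAssociatedPrime_of_minimal_mem_support {p : PrimeSpectrum R}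
    (hp : Minimal (· ∈ Module.support R X) p) : IsAssociatedPrime p.asIdeal X := by
  obtain ⟨x, hx⟩ := Module.mem_support_iff_exists_annihilator.mp hp.prop
  refine isAssociatedPrime_of_mem_minimalPrimes_annihilator ⟨⟨p.2, hx⟩, fun q ⟨hq, hxq⟩ hqp => ?_⟩
  have : (⟨q, hq⟩ : PrimeSpectrum R) ∈ Module.support R X :=
    Module.mem_support_iff_exists_annihilator.mpr ⟨x, hxq⟩
  exact (hp.eq_of_le this hqp).ge

theorem minimal_mem_support_of_minimal_mem_associatedPrimes {p : Ideal R}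
    (hp : Minimal (· ∈ associatedPrimes R X) p) :
    Minimal (· ∈ Module.support R X) ⟨p, hp.prop.isPrime⟩ := by
  refine ⟨hp.prop.mem_support, fun q hq hqp => ?_⟩
  obtain ⟨p', hp', hp'q⟩ := exists_isAssociatedPrime_le_of_mem_support hq
  exact (hp.eq_of_le hp' (hp'q.trans hqp)) ▸ hp'q

theorem sInf_associatedPrimes_le_iff_mem_support (hX : (associatedPrimes R X).Finite)
    {q : PrimeSpectrum R} : sInf (associatedPrimes R X) ≤ q.asIdeal ↔ q ∈ Module.support R X := by
  constructor
  · intro h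
    rw [← hX.coe_toFinset, ← Finset.inf_id_eq_sInf, q.2.inf_le'] at h
    obtain ⟨p, hp, hpq⟩ := h
    exact Module.mem_support_mono hpq (hX.mem_toFinset.mp hp).mem_support
  · intro hq
    obtain ⟨p, hp, hpq⟩ := exists_isAssociatedPrime_le_of_mem_support hq
    exact (sInf_le hp).trans hpq

end AssociatedPrimes

theorem colon_singleton_eq_of_chain {R M : Type*} [CommRing R] [AddCommGroup M] [Module R M]
    {p : Ideal R} (hp : p.IsPrime) {f : ℕ → Ideal R}
    (hpf : ∀ k, p ≤ f k) (hanti : ∀ i j, i < j → ¬ f i ≤ f j)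
    {C : ℕ → Submodule R M} {x : ℕ → M} (hC : ∀ k, C (k + 1) = C k ⊔ f k • (R ∙ x k))
    (hx : ∀ k, (C k).colon {x k} = p) {k l : ℕ} (hkl : k < l) :
    (C l).colon {x k} = f k := by
  induction l, hkl using Nat.le_induction with
  | base =>
    ext r
    rw [mem_colon_singleton, hC, mem_sup]
    constructor
    · rintro ⟨n, hn, _, hm, hsum⟩
      obtain ⟨κ, hκ, rfl⟩ := mem_smul_span_singleton.mp hm
      have : r - κ ∈ p := by
        rw [← hx k, mem_colon_singleton, sub_smul, ← hsum, add_sub_cancel_right]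
        exact hn
      simpa using add_mem (hpf k this) hκ
    · exact fun hr => ⟨0, zero_mem _, _, smul_mem_smul hr (mem_span_singleton_self _), zero_add _⟩
  | succ l hkl ih =>
    ext r
    rw [← ih, mem_colon_singleton, mem_colon_singleton, hC]
    refine ⟨fun hr => ?_, fun hr => mem_sup_left hr⟩
    obtain ⟨n, hn, _, hm, hsum⟩ := mem_sup.mp hr
    obtain ⟨κ, hκ, rfl⟩ := mem_smul_span_singleton.mp hm
    -- An element `s ∈ f k \ f l` lies outside `p`, and `s • κ • x l ∈ C l` forces `κ ∈ p`.
    obtain ⟨s, hsk, hsl⟩ := SetLike.not_le_iff_exists.mp (hanti k l hkl)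
    have hsr : (s * r) • x k ∈ C l := by
      rw [← mem_colon_singleton, ih]
      exact (f k).mul_mem_right r hsk
    have hsκ : s * κ ∈ p := by
      rw [← hx l, mem_colon_singleton, mul_smul, ← add_sub_cancel_left n (κ • x l), hsum,
        smul_sub, ← mul_smul]
      exact sub_mem hsr (smul_mem _ s hn)
    have hκ : κ ∈ p := (hp.mem_or_mem hsκ).resolve_left fun h => hsl (hpf l h)
    rw [← hsum]
    exact add_mem hn (by rwa [← mem_colon_singleton, hx l])

namespace IsWeaklyLaskerian

variable {R X : Type*} [CommRing R] [AddCommGroup X] [Module R X]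

theorem of_linearEquiv {Y : Type*} [AddCommGroup Y] [Module R Y] (e : X ≃ₗ[R] Y)
    (h : IsWeaklyLaskerian R Y) : IsWeaklyLaskerian R X := fun S => by
  rw [LinearEquiv.AssociatedPrimes.eq (Submodule.Quotient.equiv S (S.map (e : X →ₗ[R] Y)) e rfl)]
  exact h _

variable [IsNoetherianRing R]

theorem finite_setOf_le_of_forall_colon_eq (hX : IsWeaklyLaskerian R X)
    {p : Ideal R} (hp : p.IsPrime) {N₀ : Submodule R X} (hN₀ : N₀.FG)
    (h : ∀ N : Submodule R X, N.FG → N₀ ≤ N → ∃ x, N.colon {x} = p) :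
    {q : Ideal R | q.IsPrime ∧ p ≤ q}.Finite := by
  by_contra hinf
  obtain ⟨f, hf, hanti⟩ := Set.Infinite.exists_seq_forall_lt_not_le hinf
  choose x hx using h
  let next (k : ℕ) (N : {N : Submodule R X // N.FG ∧ N₀ ≤ N}) :
      {N : Submodule R X // N.FG ∧ N₀ ≤ N} :=
    ⟨N.1 ⊔ f k • (R ∙ x N.1 N.2.1 N.2.2),
      N.2.1.sup (FG.smul (IsNoetherian.noetherian (f k)) (fg_span_singleton _)),
      N.2.2.trans le_sup_left⟩
  let C (n : ℕ) : {N : Submodule R X // N.FG ∧ N₀ ≤ N} := Nat.rec ⟨N₀, hN₀, le_rfl⟩ next n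
  let y (k : ℕ) : X := x (C k).1 (C k).2.1 (C k).2.2
  have hC : ∀ k, (C (k + 1)).1 = (C k).1 ⊔ f k • (R ∙ y k) := fun k => rfl
  have hmono : Monotone fun k => (C k).1 :=
    monotone_nat_of_le_succ fun k => (hC k).ge.trans' le_sup_left
  have hcolon {k l : ℕ} (hkl : k < l) : (C l).1.colon {y k} = f k :=
    colon_singleton_eq_of_chain (C := fun k => (C k).1) hp (fun k => (hf k).2) hanti hC
      (fun k => hx _ _ _) hkl
  have hK : ∀ k, (⨆ l, (C l).1).colon {y k} = f k := by
    intro k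
    ext r
    rw [mem_colon_singleton, mem_iSup_of_directed _ hmono.directed_le]
    refine ⟨fun ⟨l, hl⟩ => ?_, fun hr => ⟨k + 1, ?_⟩⟩
    · rw [← hcolon (lt_max_of_lt_right k.lt_succ_self), mem_colon_singleton]
      exact hmono (le_max_left l (k + 1)) hl
    · rwa [← mem_colon_singleton, hcolon k.lt_succ_self]
  have hass : ∀ k, f k ∈ associatedPrimes R (X ⧸ ⨆ l, (C l).1) := fun k =>
    isAssociatedPrime_iff.mpr ⟨(hf k).1, Submodule.Quotient.mk (y k), by rw [bot_colon_mk, hK]⟩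
  have hinj : Function.Injective f := by
    intro i j hij
    by_contra hne
    rcases lt_or_gt_of_ne hne with h | h
    exacts [hanti i j h hij.le, hanti j i h hij.ge]
  exact (hX _).not_infinite (Set.infinite_of_injective_forall_mem hinj hass)

theorem exists_fg_finite_support (hX : IsWeaklyLaskerian R X) :
    ∃ N : Submodule R X, N.FG ∧ (Module.support R (X ⧸ N)).Finite := by
  obtain ⟨N, hN, hmax⟩ := exists_maximalFor_of_wellFoundedGT (fun N : Submodule R X => N.FG)
    (fun N => sInf (associatedPrimes R (X ⧸ N))) ⟨⊥, fg_bot⟩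
  have hsupp {N' : Submodule R X} (hN' : N'.FG) (hNN' : N ≤ N') :
      Module.support R (X ⧸ N') = Module.support R (X ⧸ N) := by
    have hsub := Module.support_subset_of_surjective _ (factor_surjective hNN')
    have hle : sInf (associatedPrimes R (X ⧸ N)) ≤ sInf (associatedPrimes R (X ⧸ N')) :=
      le_sInf fun p hp => (sInf_associatedPrimes_le_iff_mem_support (hX N)).mpr
        (hsub (IsAssociatedPrime.mem_support hp))
    refine hsub.antisymm fun q hq => ?_
    rw [← sInf_associatedPrimes_le_iff_mem_support (hX N'), ← le_antisymm hle (hmax hN' hle)]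
    exact (sInf_associatedPrimes_le_iff_mem_support (hX N)).mpr hq
  have hcone {p : Ideal R} (hp : Minimal (· ∈ associatedPrimes R (X ⧸ N)) p) :
      {q : Ideal R | q.IsPrime ∧ p ≤ q}.Finite := by
    refine hX.finite_setOf_le_of_forall_colon_eq hp.prop.isPrime hN fun N' hN' hNN' => ?_
    have hmin := minimal_mem_support_of_minimal_mem_associatedPrimes hp
    rw [← hsupp hN' hNN'] at hmin
    obtain ⟨-, x, hx⟩ := isAssociatedPrime_iff.mp (isAssociatedPrime_of_minimal_mem_support hmin)
    obtain ⟨x, rfl⟩ := Submodule.Quotient.mk_surjective _ x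
    exact ⟨x, by rw [← bot_colon_mk, ← hx]⟩
  refine ⟨N, hN, ((hX N).subset (Set.sep_subset _ _)).biUnion (t := fun p =>
    PrimeSpectrum.asIdeal ⁻¹' {q | q.IsPrime ∧ p ≤ q}) (fun p hp =>
      (hcone hp).preimage fun _ _ _ _ => PrimeSpectrum.ext) |>.subset fun q hq => ?_⟩
  obtain ⟨p', hp', hp'q⟩ := exists_isAssociatedPrime_le_of_mem_support hq
  obtain ⟨p, hpp', hp⟩ := (hX N).isPWO.exists_le_minimal hp'
  exact Set.mem_biUnion hp ⟨q.2, hpp'.trans hp'q⟩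

theorem of_fg_of_finite_support {Y : Submodule R X} (hY : Y.FG)
    (hsupp : (Module.support R (X ⧸ Y)).Finite) : IsWeaklyLaskerian R X := by
  intro S
  let W := Y.map S.mkQ
  have : Module.Finite R W := Module.Finite.iff_fg.mpr (hY.map _)
  have hsurj : Function.Surjective (Y.mapQ W S.mkQ (le_comap_map _ _)) := by
    intro z
    obtain ⟨z, rfl⟩ := Submodule.Quotient.mk_surjective _ z
    obtain ⟨x, rfl⟩ := Submodule.Quotient.mk_surjective _ z
    exact ⟨Submodule.Quotient.mk x, rfl⟩
  have hquot : associatedPrimes R ((X ⧸ S) ⧸ W) ⊆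
      PrimeSpectrum.asIdeal '' Module.support R (X ⧸ Y) :=
    fun p hp => ⟨_, Module.support_subset_of_surjective _ hsurj hp.mem_support, rfl⟩
  exact ((associatedPrimes.finite R W).union ((hsupp.image _).subset hquot)).subset
    (associatedPrimes.subset_union_of_exact W.injective_subtype (LinearMap.exact_subtype_mkQ W))

end IsWeaklyLaskerian

section BaseChange

open TensorProduct

variable {R T : Type*} [CommRing R] [CommRing T] [Algebra R T]

theorem Module.support_baseChange_subset (W : Type*) [AddCommGroup W] [Module R W] :
    Module.support T (T ⊗[R] W) ⊆
      PrimeSpectrum.comap (algebraMap R T) ⁻¹' Module.support R W := by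
  refine Module.support_subset_preimage_comap.trans (Set.preimage_mono fun q hq => ?_)
  obtain ⟨_, ⟨t, w, rfl⟩, hq⟩ :=
    (Module.mem_support_iff_of_span_eq_top (span_tmul_eq_top R T W)).mp hq
  refine Module.mem_support_iff_exists_annihilator.mpr ⟨w, le_trans (fun r hr => ?_) hq⟩
  rw [mem_annihilator_span_singleton] at hr ⊢
  rw [← tmul_smul, hr, tmul_zero]

theorem PrimeSpectrum.finite_preimage_comap [IsNoetherianRing T] [Algebra.IsIntegral R T]
    {s : Set (PrimeSpectrum R)} (hs : s.Finite) :
    (PrimeSpectrum.comap (algebraMap R T) ⁻¹' s).Finite := by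
  refine hs.preimage' fun p _ => ?_
  refine ((p.asIdeal.map (algebraMap R T)).finite_minimalPrimes_of_isNoetherianRing T).preimage
    (fun _ _ _ _ => PrimeSpectrum.ext) |>.subset fun q hq => ?_
  obtain rfl : PrimeSpectrum.comap (algebraMap R T) q = p := hq
  exact Ideal.IsIntegral.mem_minimalPrimes_map_under q.asIdeal

theorem IsWeaklyLaskerian.baseChange [IsNoetherianRing R] [IsNoetherianRing T]
    [Algebra.IsIntegral R T] {M : Type*} [AddCommGroup M] [Module R M]
    (hM : IsWeaklyLaskerian R M) : IsWeaklyLaskerian T (T ⊗[R] M) := by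
  obtain ⟨N, hN, hsupp⟩ := hM.exists_fg_finite_support
  have : Module.Finite R N := Module.Finite.iff_fg.mpr hN
  have hfin : (Module.support T (T ⊗[R] (M ⧸ N))).Finite :=
    (PrimeSpectrum.finite_preimage_comap hsupp).subset (Module.support_baseChange_subset _)
  let e := AlgebraTensorModule.tensorQuotientEquiv (R := R) T R T N
  exact IsWeaklyLaskerian.of_fg_of_finite_support (Module.Finite.iff_fg.mp inferInstance)
    (e.support_eq ▸ hfin)

end BaseChange

theorem tensorProduct_isWeaklyLaskerian_general {R : Type*} [CommRing R] [IsNoetherianRing R]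
    (M : Type*) [AddCommGroup M] [Module R M] (hM : IsWeaklyLaskerian R M)
    (T : Type*) [CommRing T] [Algebra R T] [IsNoetherianRing T]
    [Algebra.IsIntegral R T] :
    letI := tensorRightModule R M T
    IsWeaklyLaskerian T (TensorProduct R M T) := by
  let := tensorRightModule R M T
  let e : TensorProduct R M T ≃ₗ[T] TensorProduct R T M :=
    { TensorProduct.comm R M T with
      map_smul' := fun _ _ => (TensorProduct.comm R M T).apply_symm_apply _ }
  exact hM.baseChange.of_linearEquiv e

/-- Let `R` be a Noetherian commutative ring, `M` a weakly Laskerian `R`-module, and `T` a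
Noetherian commutative `R`-algebra with only finitely many maximal ideals which is
integral over `R`. Then `M ⊗[R] T` is a weakly Laskerian `T`-module. -/
theorem tensorProduct_isWeaklyLaskerian {R : Type*} [CommRing R] [IsNoetherianRing R]
    (M : Type*) [AddCommGroup M] [Module R M] (hM : IsWeaklyLaskerian R M)
    (T : Type*) [CommRing T] [Algebra R T] [IsNoetherianRing T]
    (hsl : {I : Ideal T | I.IsMaximal}.Finite) [Algebra.IsIntegral R T] :
    letI := tensorRightModule R M T
    IsWeaklyLaskerian T (TensorProduct R M T) :=
  tensorProduct_isWeaklyLaskerian_general M hM T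
end
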